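/- arXiv:2302.03719 — 5 statements merged into one kernel-verified Lean document; each statement's English description precedes it below -/
import Mathlib

section
/- Fix a signaling scheme π and parameters 0 ≤ γ and 0 ≤ δ < 1. For any (γ,δ)-best-responding receiver strategy ρ, there exists a γ-best-responding receiver strategy ρ̃ such that |U_μ(π,ρ) − U_μ(π,ρ̃)| ≤ δ. -/
open Finset
open scoped BigOperators Classical

noncomputable section

/-- `p` is a family of probability distributions on the finite set `β`, indexed by `α`. -/
def IsDist {α β : Type*} [Fintype β] (p : α → β → ℝ) : Prop :=
  (∀ x y, 0 ≤ p x y) ∧ ∀ x, ∑ y, p x y = 1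

/-- `p` is a probability distribution on the finite set `β`. -/
def IsProb {β : Type*} [Fintype β] (p : β → ℝ) : Prop :=
  (∀ y, 0 ≤ p y) ∧ ∑ y, p y = 1

/-- The marginal probability `π(s)` of signal `s` under prior `μ` and signaling scheme `π`. -/
def marg {Ω S : Type*} [Fintype Ω] (μ : Ω → ℝ) (π : Ω → S → ℝ) (s : S) : ℝ :=
  ∑ ω, μ ω * π ω s

/-- The posterior probability `π(ω|s)` of state `ω` given signal `s`. -/
def post {Ω S : Type*} [Fintype Ω] (μ : Ω → ℝ) (π : Ω → S → ℝ) (ω : Ω) (s : S) : ℝ :=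
  μ ω * π ω s / marg μ π s

/-- The receiver's expected utility `v(a, μ_s)` of action `a` under the posterior of signal `s`. -/
def vPost {Ω S A : Type*} [Fintype Ω] (μ : Ω → ℝ) (π : Ω → S → ℝ)
    (v : A → Ω → ℝ) (a : A) (s : S) : ℝ :=
  ∑ ω, post μ π ω s * v a ω

/-- Action `a` is `γ`-best-responding to signal `s`. -/
def IsBR {Ω S A : Type*} [Fintype Ω] [Fintype A] (μ : Ω → ℝ) (π : Ω → S → ℝ)
    (v : A → Ω → ℝ) (γ : ℝ) (a : A) (s : S) : Prop :=
  ∀ a' : A, vPost μ π v a' s - γ ≤ vPost μ π v a s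

/-- `ρ` is a `γ`-best-responding receiver strategy: on every signal that is sent with positive
probability, it puts probability `1` on `γ`-best-responding actions (equivalently, probability `0`
on every action that is not `γ`-best-responding). -/
def IsBRStrategy {Ω S A : Type*} [Fintype Ω] [Fintype A] (μ : Ω → ℝ) (π : Ω → S → ℝ)
    (v : A → Ω → ℝ) (γ : ℝ) (ρ : S → A → ℝ) : Prop :=
  ∀ s, 0 < marg μ π s → ∀ a, ¬ IsBR μ π v γ a s → ρ s a = 0

/-- `ρ` is a `(γ, δ)`-best-responding receiver strategy: on every signal that is sent with
positive probability, it puts probability at least `1 - δ` on `γ`-best-responding actions. -/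
def IsApproxBRStrategy {Ω S A : Type*} [Fintype Ω] [Fintype A] (μ : Ω → ℝ) (π : Ω → S → ℝ)
    (v : A → Ω → ℝ) (γ δ : ℝ) (ρ : S → A → ℝ) : Prop :=
  ∀ s, 0 < marg μ π s →
    1 - δ ≤ ∑ a ∈ Finset.univ.filter (fun a => IsBR μ π v γ a s), ρ s a

/-- The sender's expected utility `U_μ(π, ρ)`. -/
def senderU {Ω S A : Type*} [Fintype Ω] [Fintype S] [Fintype A] (μ : Ω → ℝ) (π : Ω → S → ℝ)
    (u : A → Ω → ℝ) (ρ : S → A → ℝ) : ℝ :=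
  ∑ ω, ∑ s, μ ω * π ω s * ∑ a, ρ s a * u a ω

/-- The obedient strategy for a direct-revelation scheme: take the recommended action. -/
def obedient {A : Type*} : A → A → ℝ := fun s a => if a = s then 1 else 0

/-- `OPT^BP(μ)`: the supremum of the sender's expected utility over direct-revelation schemes
(signal set `S = A`) and best-responding (`0`-best-responding) receiver strategies. -/
def OPTBP {Ω A : Type*} [Fintype Ω] [Fintype A] (μ : Ω → ℝ) (v u : A → Ω → ℝ) : ℝ :=
  sSup {x | ∃ (π : Ω → A → ℝ) (ρ : A → A → ℝ), IsDist π ∧ IsDist ρ ∧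
    IsBRStrategy μ π v 0 ρ ∧ x = senderU μ π u ρ}

/-- The `α`-robustification of a direct-revelation scheme `π`, where `aOf ω` is the receiver's
unique optimal action at state `ω`. -/
def robustify {Ω A : Type*} (π : Ω → A → ℝ) (aOf : Ω → A) (α : ℝ) : Ω → A → ℝ :=
  fun ω s => (1 - α) * π ω s + if s = aOf ω then α else 0

/-- `μ(Ω_a)`: the prior mass of the set of states whose unique optimal action is `a`. -/
def massOf {Ω A : Type*} [Fintype Ω] (μ : Ω → ℝ) (aOf : Ω → A) (a : A) : ℝ :=
  ∑ ω ∈ Finset.univ.filter (fun ω => aOf ω = a), μ ω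

/-- `μ_min = min_ω μ(ω)`. -/
def minPrior {Ω : Type*} [Fintype Ω] [Nonempty Ω] (μ : Ω → ℝ) : ℝ :=
  Finset.univ.inf' Finset.univ_nonempty μ

/-- The advantage term of recommendation `s` against deviation `a` in a direct-revelation
scheme `π`: the advantage `adv_π(s)` is the minimum of this quantity over `a ≠ s`. -/
def advTerm {Ω A : Type*} [Fintype Ω] (μ : Ω → ℝ) (π : Ω → A → ℝ) (v : A → Ω → ℝ)
    (s a : A) : ℝ :=
  ∑ ω, post μ π ω s * (v s ω - v a ω)

/-! `ρ̃(·|s)` is `ρ(·|s)` conditioned on the `γ`-best-responding actions, an event of mass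
`m ≥ 1 - δ`. Conditioning removes the mass `1 - m` outside the event and adds the same mass
inside it, so the mean of a `[0, 1]`-valued payoff moves by at most `1 - m ≤ δ`; averaging over
`(ω, s)` gives the bound on `U_μ`. -/

lemma IsDist.of_isProb {α β : Type*} [Fintype β] {p : α → β → ℝ} (h : ∀ x, IsProb (p x)) :
    IsDist p :=
  ⟨fun x => (h x).1, fun x => (h x).2⟩

lemma IsDist.isProb {α β : Type*} [Fintype β] {p : α → β → ℝ} (h : IsDist p) (x : α) :
    IsProb (p x) :=
  ⟨h.1 x, h.2 x⟩

lemma abs_add_sub_div_le {x y m : ℝ} (hx₀ : 0 ≤ x) (hxm : x ≤ m) (hy₀ : 0 ≤ y)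
    (hy : y ≤ 1 - m) (hm : 0 < m) : |x + y - x / m| ≤ 1 - m := by
  have hxm' : x * (1 - m) / m ≤ 1 - m := by
    rw [div_le_iff₀ hm]; nlinarith
  have hx' : 0 ≤ x * (1 - m) / m := by
    apply div_nonneg _ hm.le; nlinarith
  have hsplit : x + y - x / m = y - x * (1 - m) / m := by field_simp; ring
  rw [hsplit, abs_le]
  constructor <;> linarith

section Conditioning

variable {ι : Type*}

def condOn (p : ι → ℝ) (B : Finset ι) : ι → ℝ :=
  fun a => if a ∈ B then p a / ∑ b ∈ B, p b else 0

lemma condOn_eq_zero {p : ι → ℝ} {B : Finset ι} {a : ι} (ha : a ∉ B) : condOn p B a = 0 :=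
  if_neg ha

variable [Fintype ι]

lemma isProb_condOn {p : ι → ℝ} (hp : ∀ a, 0 ≤ p a) {B : Finset ι} (hB : 0 < ∑ b ∈ B, p b) :
    IsProb (condOn p B) := by
  refine ⟨fun a => ?_, ?_⟩
  · unfold condOn; split_ifs
    · exact div_nonneg (hp a) hB.le
    · exact le_rfl
  · simp only [condOn]
    rw [← Finset.sum_filter, Finset.filter_mem_eq_inter, Finset.univ_inter, ← Finset.sum_div,
      div_self hB.ne']

lemma sum_condOn_mul {p f : ι → ℝ} {B : Finset ι} :
    ∑ a, condOn p B a * f a = (∑ a ∈ B, p a * f a) / ∑ b ∈ B, p b := by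
  simp only [condOn, ite_mul, zero_mul]
  rw [← Finset.sum_filter, Finset.filter_mem_eq_inter, Finset.univ_inter, Finset.sum_div]
  exact Finset.sum_congr rfl fun a _ => div_mul_eq_mul_div _ _ _

lemma abs_sum_mul_sub_sum_condOn_mul_le {p f : ι → ℝ} (hp : IsProb p)
    (hf : ∀ a, 0 ≤ f a ∧ f a ≤ 1) {B : Finset ι} (hB : 0 < ∑ b ∈ B, p b) :
    |∑ a, p a * f a - ∑ a, condOn p B a * f a| ≤ 1 - ∑ b ∈ B, p b := by
  have hin : ∑ a ∈ B, p a * f a ≤ ∑ a ∈ B, p a :=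
    Finset.sum_le_sum fun a _ => mul_le_of_le_one_right (hp.1 a) (hf a).2
  have hout : ∑ a ∈ univ \ B, p a * f a ≤ 1 - ∑ b ∈ B, p b := by
    rw [← hp.2, ← Finset.sum_sdiff (Finset.subset_univ B), add_sub_cancel_right]
    exact Finset.sum_le_sum fun a _ => mul_le_of_le_one_right (hp.1 a) (hf a).2
  rw [sum_condOn_mul, ← Finset.sum_sdiff (Finset.subset_univ B), add_comm]
  exact abs_add_sub_div_le (Finset.sum_nonneg fun a _ => mul_nonneg (hp.1 a) (hf a).1) hin
    (Finset.sum_nonneg fun a _ => mul_nonneg (hp.1 a) (hf a).1) hout hB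

end Conditioning

lemma abs_senderU_sub_le {Ω S A : Type*} [Fintype Ω] [Fintype S] [Fintype A]
    {μ : Ω → ℝ} (hμ : IsProb μ) {π : Ω → S → ℝ} (hπ : IsDist π) {u : A → Ω → ℝ}
    {ρ ρ' : S → A → ℝ} {δ : ℝ}
    (h : ∀ s ω, |∑ a, ρ s a * u a ω - ∑ a, ρ' s a * u a ω| ≤ δ) :
    |senderU μ π u ρ - senderU μ π u ρ'| ≤ δ := by
  have hw : ∀ ω s, 0 ≤ μ ω * π ω s := fun ω s => mul_nonneg (hμ.1 ω) (hπ.1 ω s)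
  calc |senderU μ π u ρ - senderU μ π u ρ'|
      = |∑ ω, ∑ s, μ ω * π ω s * (∑ a, ρ s a * u a ω - ∑ a, ρ' s a * u a ω)| := by
        simp only [senderU, mul_sub, Finset.sum_sub_distrib]
    _ ≤ ∑ ω, ∑ s, μ ω * π ω s * δ := by
        refine (Finset.abs_sum_le_sum_abs _ _).trans (Finset.sum_le_sum fun ω _ => ?_)
        refine (Finset.abs_sum_le_sum_abs _ _).trans (Finset.sum_le_sum fun s _ => ?_)
        rw [abs_mul, abs_of_nonneg (hw ω s)]
        exact mul_le_mul_of_nonneg_left (h s ω) (hw ω s)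
    _ = δ := by
        simp only [mul_assoc, ← Finset.mul_sum, ← Finset.sum_mul, hπ.2, one_mul, ← Finset.sum_mul,
          hμ.2]

theorem restrict_to_gamma_best_general
    {Ω S A : Type*} [Fintype Ω] [Fintype S] [Fintype A]
    (μ : Ω → ℝ) (hμ : IsProb μ)
    (π : Ω → S → ℝ) (hπ : IsDist π)
    (v : A → Ω → ℝ)
    (u : A → Ω → ℝ) (hu : ∀ a ω, 0 ≤ u a ω ∧ u a ω ≤ 1)
    (γ δ : ℝ) (hδ0 : 0 ≤ δ) (hδ1 : δ < 1)
    (ρ : S → A → ℝ) (hρ : IsDist ρ) (hρBR : IsApproxBRStrategy μ π v γ δ ρ) :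
    ∃ ρ' : S → A → ℝ, IsDist ρ' ∧ IsBRStrategy μ π v γ ρ' ∧
      |senderU μ π u ρ - senderU μ π u ρ'| ≤ δ := by
  set B : S → Finset A := fun s => univ.filter (fun a => IsBR μ π v γ a s)
  have hB : ∀ s, 0 < marg μ π s → 0 < ∑ a ∈ B s, ρ s a := fun s hs => by
    linarith [hρBR s hs]
  refine ⟨fun s => if 0 < marg μ π s then condOn (ρ s) (B s) else ρ s, ?_, ?_, ?_⟩
  · refine IsDist.of_isProb fun s => ?_
    split_ifs with hs
    exacts [isProb_condOn (hρ.1 s) (hB s hs), hρ.isProb s]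
  · intro s hs a ha
    simp only [if_pos hs]
    exact condOn_eq_zero (by simpa [B] using ha)
  · refine abs_senderU_sub_le hμ hπ fun s ω => ?_
    split_ifs with hs
    · exact (abs_sum_mul_sub_sum_condOn_mul_le (hρ.isProb s) (hu · ω) (hB s hs)).trans
        (by linarith [hρBR s hs])
    · simpa using hδ0

/-- Lemma 2.1: for any `(γ, δ)`-best-responding receiver strategy `ρ`, there is
a `γ`-best-responding receiver strategy `ρ̃` with `|U_μ(π, ρ) - U_μ(π, ρ̃)| ≤ δ`. -/
theorem restrict_to_gamma_best
    {Ω S A : Type*} [Fintype Ω] [Fintype S] [Fintype A]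
    [Nonempty Ω] [Nonempty S] [Nonempty A]
    (μ : Ω → ℝ) (hμ : IsProb μ)
    (π : Ω → S → ℝ) (hπ : IsDist π)
    (v : A → Ω → ℝ) (hv : ∀ a ω, 0 ≤ v a ω ∧ v a ω ≤ 1)
    (u : A → Ω → ℝ) (hu : ∀ a ω, 0 ≤ u a ω ∧ u a ω ≤ 1)
    (γ δ : ℝ) (hγ : 0 ≤ γ) (hδ0 : 0 ≤ δ) (hδ1 : δ < 1)
    (ρ : S → A → ℝ) (hρ : IsDist ρ) (hρBR : IsApproxBRStrategy μ π v γ δ ρ) :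
    ∃ ρ' : S → A → ℝ, IsDist ρ' ∧ IsBRStrategy μ π v γ ρ' ∧
      |senderU μ π u ρ - senderU μ π u ρ'| ≤ δ :=
  restrict_to_gamma_best_general μ hμ π hπ v u hu γ δ hδ0 hδ1 ρ hρ hρBR
end
end

section
/- Assume Assumption A holds, that μ(ω) > 0 for every ω ∈ Ω (write μ_min = min_ω μ(ω)), that 0 ≤ γ with γ/(μ_min·Δ) < 1, and 0 ≤ δ < 1. Then: (i) for every ε > 0 there exists a direct-revelation signaling scheme π (with signal set S = A) such that U_μ(π,ρ) ≥ OPT^BP(μ) − γ/(μ_min·Δ) − δ − ε for every (γ,δ)-best-responding receiver strategy ρ; and (ii) for every finite nonempty signal set S, every signaling scheme π on S, and every (γ,δ)-best-responding receiver strategy ρ, it holds that U_μ(π,ρ) ≤ OPT^BP(μ) + γ/(μ_min·Δ) + δ. -/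
/-!
Both bounds rest on robustifying a direct scheme: mixing it with full revelation (recommend
`aOf ω`) with weight `α` costs the sender at most `α`, and in joint-probability units it makes
each recommendation beat every other action by `α · μ_min · Δ` minus the slack `γ` it had
before, since the states where the recommendation is the receiver's optimal action carry prior
mass at least `μ_min` and gap at least `Δ`.

For (i), robustify a near-optimal obedient scheme with `α` slightly above `γ / (μ_min Δ)`: the
recommendation becomes the only `γ`-best response, so a `(γ, δ)`-best-responding receiver
follows it with probability at least `1 - δ`. For (ii), move the receiver's mass on actions that
are not `γ`-best responses onto one that is (cost at most `δ`), pass to the direct scheme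
recommending the receiver's action, and robustify with `α = γ / (μ_min Δ)`: obedience becomes an
exact best response, so the result competes for `OPT^BP(μ)`.
-/

open Finset
open scoped BigOperators Classical

noncomputable section

section Signaling

variable {Ω S A : Type*} [Fintype Ω] {μ : Ω → ℝ} {π : Ω → S → ℝ} {ρ : S → A → ℝ}
  {v u : A → Ω → ℝ}

/-- `jointV μ π v a s = π(s) · v(a, μ_s)`: unlike `vPost`, it is linear in the scheme and
vanishes, rather than being junk, at signals that are never sent. -/
def jointV (μ : Ω → ℝ) (π : Ω → S → ℝ) (v : A → Ω → ℝ) (a : A) (s : S) : ℝ :=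
  ∑ ω, μ ω * π ω s * v a ω

lemma IsDist.le_one {α β : Type*} [Fintype β] {p : α → β → ℝ} (hp : IsDist p) (x : α) (y : β) :
    p x y ≤ 1 :=
  hp.2 x ▸ single_le_sum (fun y _ => hp.1 x y) (mem_univ y)

lemma marg_nonneg [Fintype S] (hμ : IsProb μ) (hπ : IsDist π) (s : S) : 0 ≤ marg μ π s :=
  sum_nonneg fun ω _ => mul_nonneg (hμ.1 ω) (hπ.1 ω s)

lemma marg_le_one [Fintype S] (hμ : IsProb μ) (hπ : IsDist π) (s : S) : marg μ π s ≤ 1 :=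
  calc marg μ π s ≤ ∑ ω, μ ω :=
        sum_le_sum fun ω _ => mul_le_of_le_one_right (hμ.1 ω) (hπ.le_one ω s)
    _ = 1 := hμ.2

lemma mul_eq_zero_of_marg_eq_zero [Fintype S] (hμ : IsProb μ) (hπ : IsDist π) {s : S}
    (hs : marg μ π s = 0) (ω : Ω) : μ ω * π ω s = 0 :=
  (sum_eq_zero_iff_of_nonneg fun ω _ => mul_nonneg (hμ.1 ω) (hπ.1 ω s)).1 hs ω (mem_univ ω)

lemma jointV_eq_zero_of_marg_eq_zero [Fintype S] (hμ : IsProb μ) (hπ : IsDist π) {s : S}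
    (hs : marg μ π s = 0) (a : A) : jointV μ π v a s = 0 :=
  sum_eq_zero fun ω _ => by rw [mul_eq_zero_of_marg_eq_zero hμ hπ hs ω, zero_mul]

lemma sum_sum_mul_eq_one [Fintype S] (hμ : IsProb μ) (hπ : IsDist π) :
    ∑ ω, ∑ s, μ ω * π ω s = 1 := by
  simp only [← mul_sum, hπ.2, mul_one, hμ.2]

lemma vPost_eq_div (a : A) (s : S) : vPost μ π v a s = jointV μ π v a s / marg μ π s := by
  simp only [vPost, post, jointV, div_mul_eq_mul_div, sum_div]

lemma isBR_iff [Fintype A] {γ : ℝ} {a : A} {s : S} (hs : 0 < marg μ π s) :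
    IsBR μ π v γ a s ↔ ∀ b, jointV μ π v b s - γ * marg μ π s ≤ jointV μ π v a s := by
  refine forall_congr' fun b => ?_
  rw [vPost_eq_div, vPost_eq_div, div_sub' hs.ne', div_le_div_iff_of_pos_right hs, mul_comm]

lemma exists_isBR [Fintype A] [Nonempty A] {γ : ℝ} (hγ : 0 ≤ γ) (s : S) :
    ∃ a, IsBR μ π v γ a s := by
  obtain ⟨a, -, ha⟩ := exists_max_image univ (fun a => vPost μ π v a s) univ_nonempty
  exact ⟨a, fun b => by linarith [ha b (mem_univ b)]⟩

lemma senderU_le_senderU_add [Fintype S] [Fintype A] {ρ' : S → A → ℝ} {δ : ℝ}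
    (hμ : IsProb μ) (hπ : IsDist π)
    (h : ∀ s, 0 < marg μ π s → ∀ ω, ∑ a, ρ s a * u a ω ≤ ∑ a, ρ' s a * u a ω + δ) :
    senderU μ π u ρ ≤ senderU μ π u ρ' + δ :=
  calc senderU μ π u ρ ≤ ∑ ω, ∑ s, μ ω * π ω s * (∑ a, ρ' s a * u a ω + δ) := by
        refine sum_le_sum fun ω _ => sum_le_sum fun s _ => ?_
        rcases (marg_nonneg hμ hπ s).lt_or_eq with hs | hs
        · exact mul_le_mul_of_nonneg_left (h s hs ω) (mul_nonneg (hμ.1 ω) (hπ.1 ω s))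
        · simp [mul_eq_zero_of_marg_eq_zero hμ hπ hs.symm ω]
    _ = senderU μ π u ρ' + δ := by
        simp only [senderU, mul_add, sum_add_distrib, ← sum_mul, sum_sum_mul_eq_one hμ hπ,
          one_mul]

lemma senderU_le_one [Fintype S] [Fintype A] (hμ : IsProb μ) (hπ : IsDist π) (hρ : IsDist ρ)
    (hu : ∀ a ω, 0 ≤ u a ω ∧ u a ω ≤ 1) : senderU μ π u ρ ≤ 1 :=
  calc senderU μ π u ρ ≤ ∑ ω, ∑ s, μ ω * π ω s * 1 := by
        refine sum_le_sum fun ω _ => sum_le_sum fun s _ => ?_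
        refine mul_le_mul_of_nonneg_left ?_ (mul_nonneg (hμ.1 ω) (hπ.1 ω s))
        calc ∑ a, ρ s a * u a ω ≤ ∑ a, ρ s a :=
              sum_le_sum fun a _ => mul_le_of_le_one_right (hρ.1 s a) (hu a ω).2
          _ = 1 := hρ.2 s
    _ = 1 := by simp only [mul_one, sum_sum_mul_eq_one hμ hπ]

end Signaling

section Direct

variable {Ω S A : Type*} [Fintype S] {μ : Ω → ℝ} {π : Ω → S → ℝ} {ρ : S → A → ℝ}
  {v u : A → Ω → ℝ}

lemma obedient_isDist [Fintype A] : IsDist (obedient : A → A → ℝ) :=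
  ⟨fun s a => by unfold obedient; positivity, fun s => by simp [obedient]⟩

lemma sum_obedient_mul [Fintype A] (s : A) (f : A → ℝ) : ∑ a, obedient s a * f a = f s := by
  simp [obedient, ite_mul]

def compose (π : Ω → S → ℝ) (ρ : S → A → ℝ) : Ω → A → ℝ := fun ω a => ∑ s, π ω s * ρ s a

lemma isDist_compose [Fintype A] (hπ : IsDist π) (hρ : IsDist ρ) : IsDist (compose π ρ) := by
  refine ⟨fun ω a => sum_nonneg fun s _ => mul_nonneg (hπ.1 ω s) (hρ.1 s a), fun ω => ?_⟩
  unfold compose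
  rw [sum_comm]
  simp only [← mul_sum, hρ.2, mul_one, hπ.2 ω]

lemma senderU_compose_obedient [Fintype Ω] [Fintype A] :
    senderU μ (compose π ρ) u obedient = senderU μ π u ρ := by
  simp only [senderU, compose, sum_obedient_mul, mul_sum, sum_mul]
  exact sum_congr rfl fun ω _ => sum_comm.trans (sum_congr rfl fun s _ =>
    sum_congr rfl fun a _ => by ring)

lemma marg_compose [Fintype Ω] (a : A) : marg μ (compose π ρ) a = ∑ s, ρ s a * marg μ π s := by
  simp only [marg, compose, mul_sum]
  exact sum_comm.trans (sum_congr rfl fun s _ => sum_congr rfl fun ω _ => by ring)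

lemma jointV_compose [Fintype Ω] (a b : A) :
    jointV μ (compose π ρ) v b a = ∑ s, ρ s a * jointV μ π v b s := by
  simp only [jointV, compose, mul_sum, sum_mul]
  exact sum_comm.trans (sum_congr rfl fun s _ => sum_congr rfl fun ω _ => by ring)

lemma IsBRStrategy.jointV_compose_le [Fintype Ω] [Fintype A] {γ : ℝ} (hμ : IsProb μ)
    (hπ : IsDist π) (hρ : IsDist ρ) (hBR : IsBRStrategy μ π v γ ρ) (a b : A) :
    jointV μ (compose π ρ) v b a - γ * marg μ (compose π ρ) a ≤ jointV μ (compose π ρ) v a a := by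
  rw [jointV_compose, jointV_compose, marg_compose, mul_sum, ← sum_sub_distrib]
  refine sum_le_sum fun s _ => ?_
  rcases (marg_nonneg hμ hπ s).lt_or_eq with hs | hs
  · by_cases haBR : IsBR μ π v γ a s
    · have := mul_le_mul_of_nonneg_left ((isBR_iff hs).1 haBR b) (hρ.1 s a)
      linarith
    · simp [hBR s hs a haBR]
  · simp [jointV_eq_zero_of_marg_eq_zero (v := v) hμ hπ hs.symm, ← hs]

lemma senderU_obedient_le_senderU_add [Fintype Ω] [Fintype A] {π : Ω → A → ℝ} {ρ : A → A → ℝ}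
    {δ : ℝ} (hμ : IsProb μ) (hπ : IsDist π) (hρ : IsDist ρ) (hu : ∀ a ω, 0 ≤ u a ω ∧ u a ω ≤ 1)
    (hδ : 0 ≤ δ) (hobey : ∀ s, 0 < marg μ π s → 1 - δ ≤ ρ s s) :
    senderU μ π u obedient ≤ senderU μ π u ρ + δ := by
  refine senderU_le_senderU_add hμ hπ fun s hs ω => ?_
  have hρu : ρ s s * u s ω ≤ ∑ a, ρ s a * u a ω :=
    single_le_sum (f := fun a => ρ s a * u a ω) (fun a _ => mul_nonneg (hρ.1 s a) (hu a ω).1)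
      (mem_univ s)
  have hobey_u := mul_le_mul_of_nonneg_right (hobey s hs) (hu s ω).1
  have hδu : δ * u s ω ≤ δ := mul_le_of_le_one_right hδ (hu s ω).2
  rw [sum_obedient_mul]
  linarith

lemma isBRStrategy_obedient [Fintype Ω] [Fintype A] {π : Ω → A → ℝ}
    (h : ∀ a b, b ≠ a → jointV μ π v b a ≤ jointV μ π v a a) :
    IsBRStrategy μ π v 0 obedient := by
  intro s hs a ha
  have has : a ≠ s := by
    rintro rfl
    refine ha ((isBR_iff hs).2 fun b => ?_)
    rcases eq_or_ne b a with rfl | hba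
    · simp
    · linarith [h a b hba]
  simp [obedient, has]

end Direct

section Robustify

variable {Ω A : Type*} {μ : Ω → ℝ} {π : Ω → A → ℝ} {v u : A → Ω → ℝ} {aOf : Ω → A} {α : ℝ}

lemma isDist_robustify [Fintype A] (hπ : IsDist π) (hα0 : 0 ≤ α) (hα1 : α ≤ 1) :
    IsDist (robustify π aOf α) := by
  refine ⟨fun ω s => ?_, fun ω => ?_⟩
  · have := mul_nonneg (sub_nonneg.2 hα1) (hπ.1 ω s)
    unfold robustify
    split_ifs <;> linarith
  · simp [robustify, sum_add_distrib, ← mul_sum, hπ.2]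

lemma jointV_robustify [Fintype Ω] (a b : A) :
    jointV μ (robustify π aOf α) v b a = (1 - α) * jointV μ π v b a
      + α * ∑ ω ∈ univ.filter (fun ω => aOf ω = a), μ ω * v b ω := by
  simp only [jointV, robustify, sum_filter, mul_sum, ← sum_add_distrib]
  refine sum_congr rfl fun ω _ => ?_
  by_cases h : aOf ω = a
  · simp [h]; ring
  · simp [h, Ne.symm h]; ring

lemma minPrior_mul_le_sum_filter [Fintype Ω] [Nonempty Ω] (hμ : ∀ ω, 0 ≤ μ ω) {Δ : ℝ}
    (hΔpos : 0 < Δ)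
    (hΔ : ∀ ω a, a ≠ aOf ω → Δ ≤ v (aOf ω) ω - v a ω) (hOnto : ∀ a, ∃ ω, aOf ω = a)
    {a b : A} (hba : b ≠ a) :
    minPrior μ * Δ ≤ ∑ ω ∈ univ.filter (fun ω => aOf ω = a), μ ω * (v a ω - v b ω) := by
  have hgap : ∀ ω ∈ univ.filter (fun ω => aOf ω = a), μ ω * Δ ≤ μ ω * (v a ω - v b ω) := by
    intro ω hω
    obtain rfl := (mem_filter.1 hω).2
    exact mul_le_mul_of_nonneg_left (hΔ ω b hba) (hμ ω)
  obtain ⟨ω₀, rfl⟩ := hOnto a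
  calc minPrior μ * Δ ≤ μ ω₀ * Δ :=
        mul_le_mul_of_nonneg_right (inf'_le _ (mem_univ ω₀)) hΔpos.le
    _ ≤ μ ω₀ * (v (aOf ω₀) ω₀ - v b ω₀) := hgap ω₀ (by simp)
    _ ≤ _ := single_le_sum (f := fun ω => μ ω * (v (aOf ω₀) ω - v b ω))
        (fun ω hω => (mul_nonneg (hμ ω) hΔpos.le).trans (hgap ω hω)) (by simp)

/-- The margin `α · μ_min · Δ` comes from the states at which the recommendation is the
receiver's optimal action: full revelation sends them there with probability `α`. -/
lemma jointV_robustify_add_le [Fintype Ω] [Fintype A] [Nonempty Ω] (hμ : IsProb μ)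
    (hπ : IsDist π) {Δ g : ℝ} (hΔpos : 0 < Δ) (hΔ : ∀ ω a, a ≠ aOf ω → Δ ≤ v (aOf ω) ω - v a ω)
    (hOnto : ∀ a, ∃ ω, aOf ω = a) (hα0 : 0 ≤ α) (hα1 : α ≤ 1) (hg : 0 ≤ g)
    (hobey : ∀ a b, jointV μ π v b a - g * marg μ π a ≤ jointV μ π v a a) {a b : A}
    (hba : b ≠ a) :
    jointV μ (robustify π aOf α) v b a + (α * (minPrior μ * Δ) - g)
      ≤ jointV μ (robustify π aOf α) v a a := by
  have h1 := mul_le_mul_of_nonneg_left (hobey a b) (sub_nonneg.2 hα1)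
  have h2 := mul_le_mul_of_nonneg_left (minPrior_mul_le_sum_filter hμ.1 hΔpos hΔ hOnto hba) hα0
  have h3 : g * ((1 - α) * marg μ π a) ≤ g := mul_le_of_le_one_right hg
    (mul_le_one₀ (by linarith) (marg_nonneg hμ hπ a) (marg_le_one hμ hπ a))
  simp only [mul_sub, sum_sub_distrib] at h2
  rw [jointV_robustify, jointV_robustify]
  linarith

lemma senderU_obedient_sub_le_senderU_robustify [Fintype Ω] [Fintype A] (hμ : IsProb μ)
    (hπ : IsDist π) (hu : ∀ a ω, 0 ≤ u a ω ∧ u a ω ≤ 1) (hα0 : 0 ≤ α) :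
    senderU μ π u obedient - α ≤ senderU μ (robustify π aOf α) u obedient := by
  have hU := mul_le_mul_of_nonneg_left (senderU_le_one hμ hπ obedient_isDist hu) hα0
  have hR : 0 ≤ α * ∑ ω, μ ω * u (aOf ω) ω :=
    mul_nonneg hα0 (sum_nonneg fun ω _ => mul_nonneg (hμ.1 ω) (hu _ ω).1)
  have hsplit : senderU μ (robustify π aOf α) u obedient
      = (1 - α) * senderU μ π u obedient + α * ∑ ω, μ ω * u (aOf ω) ω := by
    simp only [senderU, robustify, sum_obedient_mul, mul_sum, ← sum_add_distrib]
    refine sum_congr rfl fun ω _ => ?_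
    simp only [mul_add, add_mul, sum_add_distrib, mul_ite, ite_mul, mul_zero, zero_mul,
      sum_ite_eq', mem_univ, if_true]
    congr 1
    · exact sum_congr rfl fun s _ => by ring
    · ring
  rw [hsplit]
  linarith

end Robustify

section Redirect

variable {S A : Type*} [Fintype A] {ρ : S → A → ℝ} {P : S → A → Prop} {t : S → A}

def redirect (ρ : S → A → ℝ) (P : S → A → Prop) (t : S → A) : S → A → ℝ := fun s a =>
  (if P s a then ρ s a else 0) + if a = t s then ∑ b ∈ univ.filter (fun b => ¬ P s b), ρ s b else 0

lemma redirect_nonneg (hρ : ∀ s a, 0 ≤ ρ s a) (s : S) (a : A) : 0 ≤ redirect ρ P t s a := by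
  have := sum_nonneg fun b (_ : b ∈ univ.filter (fun b => ¬ P s b)) => hρ s b
  unfold redirect
  split_ifs <;> linarith [hρ s a]

lemma isDist_redirect (hρ : IsDist ρ) : IsDist (redirect ρ P t) := by
  refine ⟨redirect_nonneg hρ.1, fun s => ?_⟩
  · simp only [redirect, sum_add_distrib, sum_ite_eq', mem_univ, if_true, ← sum_filter]
    rw [sum_filter_add_sum_filter_not, hρ.2 s]

lemma redirect_eq_zero {s : S} {a : A} (ht : P s (t s)) (ha : ¬ P s a) :
    redirect ρ P t s a = 0 := by
  have hat : a ≠ t s := fun h => ha (h ▸ ht)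
  simp [redirect, ha, hat]

lemma sum_mul_le_sum_redirect_mul_add (hρ : ∀ s a, 0 ≤ ρ s a) {f : A → ℝ}
    (hf : ∀ a, 0 ≤ f a ∧ f a ≤ 1) (s : S) : ∑ a, ρ s a * f a
      ≤ ∑ a, redirect ρ P t s a * f a + ∑ a ∈ univ.filter (fun a => ¬ P s a), ρ s a :=
  calc ∑ a, ρ s a * f a = ∑ a ∈ univ.filter (fun a => P s a), ρ s a * f a
        + ∑ a ∈ univ.filter (fun a => ¬ P s a), ρ s a * f a :=
        (sum_filter_add_sum_filter_not _ _ _).symm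
    _ ≤ _ := by
        refine add_le_add ?_ (sum_le_sum fun a _ => mul_le_of_le_one_right (hρ s a) (hf a).2)
        rw [sum_filter]
        refine sum_le_sum fun a _ => ?_
        have := sum_nonneg fun b (_ : b ∈ univ.filter (fun b => ¬ P s b)) => hρ s b
        have := (hf a).1
        simp only [redirect, add_mul, ite_mul, zero_mul]
        split_ifs <;> nlinarith

lemma IsApproxBRStrategy.exists_isBRStrategy {Ω : Type*} [Fintype Ω] [Fintype S] [Nonempty A]
    {μ : Ω → ℝ} {π : Ω → S → ℝ} {v u : A → Ω → ℝ} {γ δ : ℝ} (hμ : IsProb μ) (hπ : IsDist π)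
    (hρ : IsDist ρ) (hu : ∀ a ω, 0 ≤ u a ω ∧ u a ω ≤ 1) (hγ : 0 ≤ γ)
    (happrox : IsApproxBRStrategy μ π v γ δ ρ) :
    ∃ ρ', IsDist ρ' ∧ IsBRStrategy μ π v γ ρ' ∧ senderU μ π u ρ ≤ senderU μ π u ρ' + δ := by
  choose t ht using fun s => exists_isBR (μ := μ) (π := π) (v := v) hγ s
  refine ⟨redirect ρ (fun s a => IsBR μ π v γ a s) t, isDist_redirect hρ,
    fun s _ a ha => redirect_eq_zero (ht s) ha, senderU_le_senderU_add hμ hπ fun s hs ω => ?_⟩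
  have hsplit := sum_filter_add_sum_filter_not univ (fun a => IsBR μ π v γ a s) (ρ s)
  rw [hρ.2 s] at hsplit
  linarith [happrox s hs, sum_mul_le_sum_redirect_mul_add (P := fun s a => IsBR μ π v γ a s)
    (t := t) hρ.1 (hu · ω) s]

end Redirect

section OPTBP

variable {Ω A : Type*} [Fintype Ω] [Fintype A] {μ : Ω → ℝ} {v u : A → Ω → ℝ}

lemma senderU_le_OPTBP (hμ : IsProb μ) (hu : ∀ a ω, 0 ≤ u a ω ∧ u a ω ≤ 1)
    {π : Ω → A → ℝ} {ρ : A → A → ℝ} (hπ : IsDist π) (hρ : IsDist ρ)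
    (hBR : IsBRStrategy μ π v 0 ρ) : senderU μ π u ρ ≤ OPTBP μ v u := by
  refine le_csSup ⟨1, ?_⟩ ⟨π, ρ, hπ, hρ, hBR, rfl⟩
  rintro _ ⟨π', ρ', hπ', hρ', -, rfl⟩
  exact senderU_le_one hμ hπ' hρ' hu

lemma exists_lt_senderU_of_lt_OPTBP [Nonempty A] {x : ℝ} (hx : x < OPTBP μ v u) :
    ∃ (π : Ω → A → ℝ) (ρ : A → A → ℝ), IsDist π ∧ IsDist ρ ∧ IsBRStrategy μ π v 0 ρ ∧
      x < senderU μ π u ρ := by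
  obtain ⟨a₀⟩ := ‹Nonempty A›
  let π₀ : Ω → A → ℝ := fun _ => obedient a₀
  choose t ht using fun s => exists_isBR (μ := μ) (π := π₀) (v := v) le_rfl s
  have hBR : IsBRStrategy μ π₀ v 0 (fun s => obedient (t s)) := fun s _ a ha => by
    have hat : a ≠ t s := fun h => ha (h ▸ ht s)
    simp [obedient, hat]
  have hne : Set.Nonempty {x | ∃ (π : Ω → A → ℝ) (ρ : A → A → ℝ), IsDist π ∧ IsDist ρ ∧
      IsBRStrategy μ π v 0 ρ ∧ x = senderU μ π u ρ} :=
    ⟨_, π₀, _, ⟨fun _ => obedient_isDist.1 a₀, fun _ => obedient_isDist.2 a₀⟩,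
      ⟨fun s => obedient_isDist.1 (t s), fun s => obedient_isDist.2 (t s)⟩, hBR, rfl⟩
  obtain ⟨_, ⟨π, ρ, hπ, hρ, hBR, rfl⟩, hlt⟩ := exists_lt_of_lt_csSup hne hx
  exact ⟨π, ρ, hπ, hρ, hBR, hlt⟩

end OPTBP

section Robustness

variable {Ω A : Type*} [Fintype Ω] [Fintype A] [Nonempty Ω] {μ : Ω → ℝ} {v u : A → Ω → ℝ}
  {aOf : Ω → A} {Δ : ℝ}

theorem senderU_sub_le_senderU_robustify_compose (hμ : IsProb μ)
    (hu : ∀ a ω, 0 ≤ u a ω ∧ u a ω ≤ 1) (hΔpos : 0 < Δ)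
    (hΔ : ∀ ω a, a ≠ aOf ω → Δ ≤ v (aOf ω) ω - v a ω) (hOnto : ∀ a, ∃ ω, aOf ω = a)
    {S : Type*} [Fintype S] {π : Ω → S → ℝ} {ρ₀ : S → A → ℝ} (hπ : IsDist π) (hρ₀ : IsDist ρ₀)
    (hBR₀ : IsBRStrategy μ π v 0 ρ₀) {γ δ α : ℝ} (hγ : 0 ≤ γ) (hα0 : 0 ≤ α) (hα1 : α ≤ 1)
    (hγα : γ < α * (minPrior μ * Δ)) (hδ : 0 ≤ δ) {ρ : A → A → ℝ} (hρ : IsDist ρ)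
    (happrox : IsApproxBRStrategy μ (robustify (compose π ρ₀) aOf α) v γ δ ρ) :
    senderU μ π u ρ₀ - α - δ ≤ senderU μ (robustify (compose π ρ₀) aOf α) u ρ := by
  have hπ₁ := isDist_compose hπ hρ₀
  have hπ₂ := isDist_robustify (aOf := aOf) hπ₁ hα0 hα1
  have hobey : ∀ s, 0 < marg μ (robustify (compose π ρ₀) aOf α) s → 1 - δ ≤ ρ s s := by
    intro s hs
    have honly : univ.filter (fun a => IsBR μ (robustify (compose π ρ₀) aOf α) v γ a s) ⊆ {s} := by
      intro b hb
      rw [mem_singleton]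
      by_contra hbs
      have h1 := (isBR_iff hs).1 (mem_filter.1 hb).2 s
      have h2 := jointV_robustify_add_le hμ hπ₁ hΔpos hΔ hOnto hα0 hα1 le_rfl
        (hBR₀.jointV_compose_le hμ hπ hρ₀) hbs
      have h3 := mul_le_of_le_one_right hγ (marg_le_one hμ hπ₂ s)
      linarith
    calc 1 - δ ≤ _ := happrox s hs
      _ ≤ ∑ a ∈ {s}, ρ s a := sum_le_sum_of_subset_of_nonneg honly fun a _ _ => hρ.1 s a
      _ = ρ s s := sum_singleton _ _
  have hδ' := senderU_obedient_le_senderU_add hμ hπ₂ hρ hu hδ hobey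
  have hα' := senderU_obedient_sub_le_senderU_robustify (aOf := aOf) hμ hπ₁ hu hα0
  rw [senderU_compose_obedient] at hα'
  linarith

theorem senderU_sub_le_OPTBP (hμ : IsProb μ) (hu : ∀ a ω, 0 ≤ u a ω ∧ u a ω ≤ 1)
    (hΔpos : 0 < Δ) (hΔ : ∀ ω a, a ≠ aOf ω → Δ ≤ v (aOf ω) ω - v a ω)
    (hOnto : ∀ a, ∃ ω, aOf ω = a) {S : Type*} [Fintype S] {π : Ω → S → ℝ} {ρ : S → A → ℝ}
    (hπ : IsDist π) (hρ : IsDist ρ) {γ c : ℝ} (hBR : IsBRStrategy μ π v γ ρ) (hγ : 0 ≤ γ)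
    (hc0 : 0 ≤ c) (hc1 : c ≤ 1) (hγc : γ ≤ c * (minPrior μ * Δ)) :
    senderU μ π u ρ - c ≤ OPTBP μ v u := by
  have hπ₁ := isDist_compose hπ hρ
  have hobedient : IsBRStrategy μ (robustify (compose π ρ) aOf c) v 0 obedient :=
    isBRStrategy_obedient fun a b hba => by
      linarith [jointV_robustify_add_le hμ hπ₁ hΔpos hΔ hOnto hc0 hc1 hγ
        (hBR.jointV_compose_le hμ hπ hρ) hba]
  have hOPT := senderU_le_OPTBP hμ hu (isDist_robustify hπ₁ hc0 hc1) obedient_isDist hobedient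
  have hc := senderU_obedient_sub_le_senderU_robustify (aOf := aOf) hμ hπ₁ hu hc0
  rw [senderU_compose_obedient] at hc
  linarith

end Robustness

universe uS

theorem bp_robustness_general
    {Ω A : Type*} [Fintype Ω] [Fintype A] [Nonempty Ω]
    (μ : Ω → ℝ) (hμ : IsProb μ) (hμpos : ∀ ω, 0 < μ ω)
    (v : A → Ω → ℝ)
    (u : A → Ω → ℝ) (hu : ∀ a ω, 0 ≤ u a ω ∧ u a ω ≤ 1)
    -- Assumption A: `aOf ω` is the unique optimal action at state `ω`, the optimality gap is
    -- at least `Δ > 0`, and every action is uniquely optimal at some state.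
    (aOf : Ω → A)
    (Δ : ℝ) (hΔpos : 0 < Δ) (hΔ : ∀ ω a, a ≠ aOf ω → Δ ≤ v (aOf ω) ω - v a ω)
    (hOnto : ∀ a, ∃ ω, aOf ω = a)
    (γ δ : ℝ) (hγ : 0 ≤ γ) (hγ1 : γ / (minPrior μ * Δ) < 1) (hδ0 : 0 ≤ δ) :
    (∀ ε > 0, ∃ π : Ω → A → ℝ, IsDist π ∧
      ∀ ρ : A → A → ℝ, IsDist ρ → IsApproxBRStrategy μ π v γ δ ρ →
        OPTBP μ v u - γ / (minPrior μ * Δ) - δ - ε ≤ senderU μ π u ρ) ∧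
    (∀ (S : Type uS) [Fintype S] [Nonempty S] (π : Ω → S → ℝ), IsDist π →
      ∀ ρ : S → A → ℝ, IsDist ρ → IsApproxBRStrategy μ π v γ δ ρ →
        senderU μ π u ρ ≤ OPTBP μ v u + γ / (minPrior μ * Δ) + δ) := by
  have : Nonempty A := .map aOf ‹_›
  have hm : 0 < minPrior μ * Δ := mul_pos ((lt_inf'_iff univ_nonempty).2 fun ω _ => hμpos ω) hΔpos
  set c := γ / (minPrior μ * Δ)
  have hc0 : 0 ≤ c := div_nonneg hγ hm.le
  refine ⟨fun ε hε => ?_, fun S _ _ π hπ ρ hρ happrox => ?_⟩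
  · obtain ⟨π, ρ₀, hπ, hρ₀, hBR₀, hlt⟩ :=
      exists_lt_senderU_of_lt_OPTBP (μ := μ) (v := v) (u := u) (sub_lt_self _ (half_pos hε))
    set α := min 1 (c + ε / 2)
    have hcα : c < α := lt_min hγ1 (by linarith)
    have hα0 : 0 ≤ α := hc0.trans hcα.le
    refine ⟨robustify (compose π ρ₀) aOf α,
      isDist_robustify (isDist_compose hπ hρ₀) hα0 (min_le_left _ _), fun ρ hρ happrox => ?_⟩
    have := senderU_sub_le_senderU_robustify_compose hμ hu hΔpos hΔ hOnto hπ hρ₀ hBR₀ hγ hα0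
      (min_le_left _ _) ((div_lt_iff₀ hm).1 hcα) hδ0 hρ happrox
    linarith [min_le_right 1 (c + ε / 2)]
  · obtain ⟨ρ', hρ', hBR', hδ⟩ := happrox.exists_isBRStrategy hμ hπ hρ hu hγ
    have := senderU_sub_le_OPTBP hμ hu hΔpos hΔ hOnto hπ hρ' hBR' hγ hc0 hγ1.le
      ((div_le_iff₀ hm).1 le_rfl)
    linarith

/-- Theorem 2.2: under Assumption A, with `μ_min = min_ω μ(ω) > 0` and
`γ/(μ_min·Δ) < 1` and `0 ≤ δ < 1`:
(i) for every `ε > 0` there is a direct-revelation scheme guaranteeing the sender at least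
`OPT^BP(μ) - γ/(μ_min·Δ) - δ - ε` against every `(γ, δ)`-best-responding strategy; and
(ii) no scheme on any finite nonempty signal set can give the sender more than
`OPT^BP(μ) + γ/(μ_min·Δ) + δ` against any `(γ, δ)`-best-responding strategy. -/
theorem bp_robustness
    {Ω A : Type*} [Fintype Ω] [Fintype A] [Nonempty Ω] [Nonempty A]
    (μ : Ω → ℝ) (hμ : IsProb μ) (hμpos : ∀ ω, 0 < μ ω)
    (v : A → Ω → ℝ) (hv : ∀ a ω, 0 ≤ v a ω ∧ v a ω ≤ 1)
    (u : A → Ω → ℝ) (hu : ∀ a ω, 0 ≤ u a ω ∧ u a ω ≤ 1)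
    -- Assumption A: `aOf ω` is the unique optimal action at state `ω`, the optimality gap is
    -- at least `Δ > 0`, and every action is uniquely optimal at some state.
    (aOf : Ω → A) (hBest : ∀ ω a, a ≠ aOf ω → v a ω < v (aOf ω) ω)
    (Δ : ℝ) (hΔpos : 0 < Δ) (hΔ : ∀ ω a, a ≠ aOf ω → Δ ≤ v (aOf ω) ω - v a ω)
    (hOnto : ∀ a, ∃ ω, aOf ω = a)
    (γ δ : ℝ) (hγ : 0 ≤ γ) (hγ1 : γ / (minPrior μ * Δ) < 1) (hδ0 : 0 ≤ δ) (hδ1 : δ < 1) :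
    (∀ ε > 0, ∃ π : Ω → A → ℝ, IsDist π ∧
      ∀ ρ : A → A → ℝ, IsDist ρ → IsApproxBRStrategy μ π v γ δ ρ →
        OPTBP μ v u - γ / (minPrior μ * Δ) - δ - ε ≤ senderU μ π u ρ) ∧
    (∀ (S : Type uS) [Fintype S] [Nonempty S] (π : Ω → S → ℝ), IsDist π →
      ∀ ρ : S → A → ℝ, IsDist ρ → IsApproxBRStrategy μ π v γ δ ρ →
        senderU μ π u ρ ≤ OPTBP μ v u + γ / (minPrior μ * Δ) + δ) :=
  bp_robustness_general μ hμ hμpos v u hu aOf Δ hΔpos hΔ hOnto γ δ hγ hγ1 hδ0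
end
end

section
/- Assume Assumption A holds and μ(ω) > 0 for all ω. Let π be a direct-revelation scheme, α ∈ [0,1], and let π' be the α-robustification of π. Then for every signal s ∈ A with π(s) > 0, one has π'(s) > 0 and the advantage under π' satisfies adv_{π'}(s) ≥ (1−α)·(π(s)/π'(s))·adv_π(s) + α·(μ(Ω_s)/π'(s))·Δ. -/
open Finset
open scoped BigOperators Classical

noncomputable section

/-! The unnormalized advantage `∑ ω, π'(ω, s) (v(s, ω) - v(a, ω))` is linear in the scheme, and
`π'(·, s) = (1 - α) π(·, s) + α μ|_{Ω_s}`. The first part contributes at least `π(s) · b`, the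
second at least `μ(Ω_s) · Δ`, because every state of `Ω_s` prefers `s` to `a` by `Δ`; dividing
by `π'(s) = (1 - α) π(s) + α μ(Ω_s) > 0` gives the bound. -/

section Robustify

variable {Ω A : Type*} [Fintype Ω]

theorem advTerm_eq_sum_div (μ : Ω → ℝ) (π : Ω → A → ℝ) (v : A → Ω → ℝ) (s a : A) :
    advTerm μ π v s a = (∑ ω, μ ω * π ω s * (v s ω - v a ω)) / marg μ π s := by
  rw [advTerm, Finset.sum_div]
  exact Finset.sum_congr rfl fun ω _ => by rw [post]; ring

theorem sum_mul_robustify (μ : Ω → ℝ) (π : Ω → A → ℝ) (aOf : Ω → A) (α : ℝ) (s : A)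
    (f : Ω → ℝ) :
    ∑ ω, μ ω * robustify π aOf α ω s * f ω =
      (1 - α) * ∑ ω, μ ω * π ω s * f ω + α * ∑ ω with aOf ω = s, μ ω * f ω := by
  rw [Finset.sum_filter, Finset.mul_sum, Finset.mul_sum, ← Finset.sum_add_distrib]
  refine Finset.sum_congr rfl fun ω _ => ?_
  by_cases h : aOf ω = s
  · simp only [robustify, h, if_true]; ring
  · simp only [robustify, h, Ne.symm h, if_false]; ring

theorem marg_robustify (μ : Ω → ℝ) (π : Ω → A → ℝ) (aOf : Ω → A) (α : ℝ) (s : A) :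
    marg μ (robustify π aOf α) s = (1 - α) * marg μ π s + α * massOf μ aOf s := by
  simpa [marg, massOf] using sum_mul_robustify μ π aOf α s 1

theorem massOf_pos {μ : Ω → ℝ} (hμ : ∀ ω, 0 < μ ω) {aOf : Ω → A} {s : A}
    (hs : ∃ ω, aOf ω = s) : 0 < massOf μ aOf s := by
  obtain ⟨ω, hω⟩ := hs
  exact Finset.sum_pos (fun ω _ => hμ ω) ⟨ω, Finset.mem_filter.2 ⟨Finset.mem_univ ω, hω⟩⟩

theorem massOf_mul_le_sum {μ : Ω → ℝ} (hμ : ∀ ω, 0 ≤ μ ω) {v : A → Ω → ℝ} {aOf : Ω → A}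
    {Δ : ℝ} (hΔ : ∀ ω a, a ≠ aOf ω → Δ ≤ v (aOf ω) ω - v a ω) {s a : A} (ha : a ≠ s) :
    massOf μ aOf s * Δ ≤ ∑ ω with aOf ω = s, μ ω * (v s ω - v a ω) := by
  rw [massOf, Finset.sum_mul]
  refine Finset.sum_le_sum fun ω hω => ?_
  obtain rfl := (Finset.mem_filter.1 hω).2
  exact mul_le_mul_of_nonneg_left (hΔ ω a ha) (hμ ω)

end Robustify

theorem robustify_advantage_general
    {Ω A : Type*} [Fintype Ω] [Fintype A]
    (μ : Ω → ℝ) (hμpos : ∀ ω, 0 < μ ω)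
    (v : A → Ω → ℝ)
    -- Assumption A
    (aOf : Ω → A)
    (Δ : ℝ) (hΔ : ∀ ω a, a ≠ aOf ω → Δ ≤ v (aOf ω) ω - v a ω)
    (hOnto : ∀ a, ∃ ω, aOf ω = a)
    (π : Ω → A → ℝ) (α : ℝ) (hα0 : 0 ≤ α) (hα1 : α ≤ 1)
    (s : A) (hs : 0 < marg μ π s) :
    0 < marg μ (robustify π aOf α) s ∧
    ∀ b : ℝ, (∀ a, a ≠ s → b ≤ advTerm μ π v s a) →
      ∀ a, a ≠ s →
        (1 - α) * (marg μ π s / marg μ (robustify π aOf α) s) * b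
            + α * (massOf μ aOf s / marg μ (robustify π aOf α) s) * Δ
          ≤ advTerm μ (robustify π aOf α) v s a := by
  have hM : 0 < massOf μ aOf s := massOf_pos hμpos (hOnto s)
  have hm' : 0 < marg μ (robustify π aOf α) s := by
    rw [marg_robustify]
    rcases hα1.lt_or_eq with hα | rfl
    · exact add_pos_of_pos_of_nonneg (mul_pos (by linarith) hs) (mul_nonneg hα0 hM.le)
    · simpa using hM
  refine ⟨hm', fun b hb a ha => ?_⟩
  have hT : marg μ π s * b ≤ ∑ ω, μ ω * π ω s * (v s ω - v a ω) := by
    have := hb a ha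
    rwa [advTerm_eq_sum_div, le_div_iff₀ hs, mul_comm] at this
  have hW := massOf_mul_le_sum (fun ω => (hμpos ω).le) hΔ ha
  calc (1 - α) * (marg μ π s / marg μ (robustify π aOf α) s) * b
          + α * (massOf μ aOf s / marg μ (robustify π aOf α) s) * Δ
        = ((1 - α) * (marg μ π s * b) + α * (massOf μ aOf s * Δ))
            / marg μ (robustify π aOf α) s := by ring
    _ ≤ ((1 - α) * ∑ ω, μ ω * π ω s * (v s ω - v a ω)
          + α * ∑ ω with aOf ω = s, μ ω * (v s ω - v a ω))
            / marg μ (robustify π aOf α) s := by gcongr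
    _ = advTerm μ (robustify π aOf α) v s a := by
        rw [advTerm_eq_sum_div, sum_mul_robustify]

/-- Lemma 2.6, second item: under Assumption A with a fully supported prior,
for every signal `s` with `π(s) > 0`, the `α`-robustification `π'` of `π` satisfies `π'(s) > 0`
and `adv_{π'}(s) ≥ (1 - α)·(π(s)/π'(s))·adv_π(s) + α·(μ(Ω_s)/π'(s))·Δ`.
(The advantage `adv_π(s)` is the minimum of `advTerm μ π v s a` over deviations `a ≠ s`; the
inequality between the minima is expressed via an arbitrary lower bound `b` on the terms of
`adv_π(s)`.) -/
theorem robustify_advantage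
    {Ω A : Type*} [Fintype Ω] [Fintype A] [Nonempty Ω] [Nonempty A]
    (μ : Ω → ℝ) (hμ : IsProb μ) (hμpos : ∀ ω, 0 < μ ω)
    (v : A → Ω → ℝ) (hv : ∀ a ω, 0 ≤ v a ω ∧ v a ω ≤ 1)
    -- Assumption A
    (aOf : Ω → A) (hBest : ∀ ω a, a ≠ aOf ω → v a ω < v (aOf ω) ω)
    (Δ : ℝ) (hΔpos : 0 < Δ) (hΔ : ∀ ω a, a ≠ aOf ω → Δ ≤ v (aOf ω) ω - v a ω)
    (hOnto : ∀ a, ∃ ω, aOf ω = a)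
    (π : Ω → A → ℝ) (hπ : IsDist π) (α : ℝ) (hα0 : 0 ≤ α) (hα1 : α ≤ 1)
    (s : A) (hs : 0 < marg μ π s) :
    0 < marg μ (robustify π aOf α) s ∧
    ∀ b : ℝ, (∀ a, a ≠ s → b ≤ advTerm μ π v s a) →
      ∀ a, a ≠ s →
        (1 - α) * (marg μ π s / marg μ (robustify π aOf α) s) * b
            + α * (massOf μ aOf s / marg μ (robustify π aOf α) s) * Δ
          ≤ advTerm μ (robustify π aOf α) v s a :=
  robustify_advantage_general μ hμpos v aOf Δ hΔ hOnto π α hα0 hα1 s hs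
end
end

section
/- Let λ > 1 with |A|·λ ≥ 1. Let π be a signaling scheme, and let ρ be the quantal-response strategy: for each signal s with π(s) > 0, ρ(a|s) = exp(λ·v(a,μ_s)) / Σ_{a'∈A} exp(λ·v(a',μ_s)). Then ρ is a (γ, δ)-best-responding strategy with γ = log(|A|·λ)/λ and δ = 1/λ; that is, for every s with π(s) > 0, the total ρ(·|s)-probability of actions that are γ-best-responding to s is at least 1 − 1/λ. -/
open Finset
open scoped BigOperators Classical

noncomputable section

/-!
If action `a` is not `γ`-best-responding, some `a'` beats it by more than `γ`, so its
quantal-response weight is at most `exp(-λγ)` times that of `a'`, hence at most `exp(-λγ)`.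
Summing over at most `|A|` such actions, the non-best-responding mass is at most
`|A| · exp(-λγ)`, which equals `1/λ` for `γ = log(|A|·λ)/λ`.
-/

namespace Softmax

open Real

variable {ι : Type*} [Fintype ι]

def softmax (lam : ℝ) (f : ι → ℝ) (i : ι) : ℝ :=
  exp (lam * f i) / ∑ j, exp (lam * f j)

theorem sum_softmax [Nonempty ι] (lam : ℝ) (f : ι → ℝ) : ∑ i, softmax lam f i = 1 := by
  have hpos : 0 < ∑ j, exp (lam * f j) := sum_pos (fun j _ => exp_pos _) univ_nonempty
  simp only [softmax]
  rw [← sum_div, div_self hpos.ne']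

theorem softmax_le_exp_neg_of_add_le {lam γ : ℝ} (hlam : 0 ≤ lam) {f : ι → ℝ} {i j : ι}
    (hij : f i + γ ≤ f j) : softmax lam f i ≤ exp (-(lam * γ)) := by
  have hj : exp (lam * f j) ≤ ∑ k, exp (lam * f k) :=
    single_le_sum (f := fun k => exp (lam * f k)) (fun k _ => (exp_pos _).le) (mem_univ j)
  have hpos : 0 < ∑ k, exp (lam * f k) := (exp_pos _).trans_le hj
  rw [softmax, div_le_iff₀ hpos]
  calc exp (lam * f i) ≤ exp (lam * f j + -(lam * γ)) := exp_le_exp.2 (by nlinarith)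
    _ = exp (lam * f j) * exp (-(lam * γ)) := exp_add _ _
    _ ≤ (∑ k, exp (lam * f k)) * exp (-(lam * γ)) := by gcongr
    _ = exp (-(lam * γ)) * ∑ k, exp (lam * f k) := mul_comm _ _

theorem one_sub_card_mul_exp_neg_le_sum_softmax [Nonempty ι] {lam γ : ℝ} (hlam : 0 ≤ lam)
    (f : ι → ℝ) (p : ι → Prop) [DecidablePred p] (hp : ∀ i, ¬ p i → ∃ j, f i + γ < f j) :
    1 - Fintype.card ι * exp (-(lam * γ)) ≤ ∑ i ∈ univ.filter p, softmax lam f i := by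
  have hbad : ∑ i ∈ univ.filter (fun i => ¬ p i), softmax lam f i
      ≤ Fintype.card ι * exp (-(lam * γ)) :=
    calc ∑ i ∈ univ.filter (fun i => ¬ p i), softmax lam f i
        ≤ ∑ _i ∈ univ.filter (fun i => ¬ p i), exp (-(lam * γ)) := by
          refine sum_le_sum fun i hi => ?_
          obtain ⟨j, hj⟩ := hp i (mem_filter.1 hi).2
          exact softmax_le_exp_neg_of_add_le hlam hj.le
      _ ≤ ∑ _i, exp (-(lam * γ)) :=
          sum_le_sum_of_subset_of_nonneg (filter_subset _ _) fun _ _ _ => (exp_pos _).le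
      _ = Fintype.card ι * exp (-(lam * γ)) := by simp
  have hsplit := sum_filter_add_sum_filter_not univ p (softmax lam f)
  linarith [sum_softmax lam f]

end Softmax

open Softmax in
theorem quantal_response_approx_br_general
    {Ω S A : Type*} [Fintype Ω] [Fintype A]
    [Nonempty A]
    (μ : Ω → ℝ)
    (π : Ω → S → ℝ)
    (v : A → Ω → ℝ)
    (lam : ℝ) (hlam : 1 < lam)
    (ρ : S → A → ℝ)
    (hρ : ∀ s, 0 < marg μ π s → ∀ a, ρ s a =
      Real.exp (lam * vPost μ π v a s) / ∑ a' : A, Real.exp (lam * vPost μ π v a' s)) :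
    IsApproxBRStrategy μ π v (Real.log ((Fintype.card A : ℝ) * lam) / lam) (1 / lam) ρ := by
  intro s hs
  have hlam0 : 0 < lam := zero_lt_one.trans hlam
  have hρs : ρ s = softmax lam (vPost μ π v · s) := funext (hρ s hs)
  have hmass :
      (Fintype.card A : ℝ) * Real.exp (-(lam * (Real.log (Fintype.card A * lam) / lam)))
        = 1 / lam := by
    have hcard : (Fintype.card A : ℝ) ≠ 0 := Nat.cast_ne_zero.2 Fintype.card_ne_zero
    rw [mul_div_cancel₀ _ hlam0.ne', Real.exp_neg, Real.exp_log (by positivity)]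
    field_simp
  rw [hρs, ← hmass]
  refine one_sub_card_mul_exp_neg_le_sum_softmax hlam0.le _ _ fun a ha => ?_
  obtain ⟨a', ha'⟩ := not_forall.1 ha
  exact ⟨a', by linarith [not_le.1 ha']⟩

/-- Example 1.2, quantal response: for `λ > 1` with `|A|·λ ≥ 1`, the
quantal-response strategy `ρ(a|s) = exp(λ·v(a,μ_s)) / Σ_{a'} exp(λ·v(a',μ_s))` is a
`(log(|A|·λ)/λ, 1/λ)`-best-responding strategy. -/
theorem quantal_response_approx_br
    {Ω S A : Type*} [Fintype Ω] [Fintype S] [Fintype A]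
    [Nonempty Ω] [Nonempty S] [Nonempty A]
    (μ : Ω → ℝ) (hμ : IsProb μ)
    (π : Ω → S → ℝ) (hπ : IsDist π)
    (v : A → Ω → ℝ) (hv : ∀ a ω, 0 ≤ v a ω ∧ v a ω ≤ 1)
    (lam : ℝ) (hlam : 1 < lam) (hAlam : 1 ≤ (Fintype.card A : ℝ) * lam)
    (ρ : S → A → ℝ)
    (hρ : ∀ s, 0 < marg μ π s → ∀ a, ρ s a =
      Real.exp (lam * vPost μ π v a s) / ∑ a' : A, Real.exp (lam * vPost μ π v a' s)) :
    IsApproxBRStrategy μ π v (Real.log ((Fintype.card A : ℝ) * lam) / lam) (1 / lam) ρ :=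
  quantal_response_approx_br_general μ π v lam hlam ρ hρ
end
end

section
/- Fix a signaling scheme π and t ≥ 1, and let (ω_τ, s_τ) for τ = 1,…,t be i.i.d. random pairs on Ω × S with joint law P(ω,s) = μ(ω)·π(s|ω). For each s, let N_s = #{τ ≤ t : s_τ = s}, and when N_s > 0 define the empirical utility v̂(a,s) = (1/N_s)·Σ_{τ ≤ t, s_τ = s} v(a, ω_τ). Suppose that for every s ∈ S with π(s) > 0 one has √(3·log(2|S|t)/(π(s)·t)) < 1/2. Then with probability at least 1 − 2/t the following event holds: for every s ∈ S with π(s) > 0, N_s > 0 and for every a ∈ A, |v̂(a,s) − v(a, μ_s)| ≤ 2·√(3·log(2|S|t)/(π(s)·t)) + (2/π(s))·√(log(2|S||A|t)/(2t)). -/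
/-! Both `N_s = ∑_τ 1[s_τ = s]` and `T_{s,a} = ∑_τ 1[s_τ = s] v(a, ω_τ)` are sums of `t`
independent `[0, 1]`-valued variables, with means `t π(s)` and `t π(s) v(a, μ_s)`. The two radii
in the bound are chosen so that the multiplicative Chernoff bound for `N_s` fails with probability
at most `1/(|S| t)` and Hoeffding's inequality for each `T_{s,a}` with probability at most
`1/(|S||A| t)`; a union bound over signals and actions leaves `2/t`. Off that event
`N_s ≥ t π(s)/2 > 0`, and with `p = π(s)`, `V = p v(a, μ_s) ∈ [0, p]`,
`T/N - V/p = (p (T - tV) + V (tp - N)) / (N p)` gives the bound. -/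

open Finset
open scoped BigOperators Classical

noncomputable section

open MeasureTheory ProbabilityTheory

section ScalarInequalities

open Real

lemma exp_mul_le_one_add_exp_sub_one_mul {x : ℝ} (c : ℝ) (h0 : 0 ≤ x) (h1 : x ≤ 1) :
    exp (c * x) ≤ 1 + (exp c - 1) * x := by
  have h := convexOn_exp.2 (Set.mem_univ 0) (Set.mem_univ c) (sub_nonneg.2 h1) h0
    (sub_add_cancel 1 x)
  simp only [smul_eq_mul, mul_zero, zero_add, exp_zero, mul_one] at h
  rw [mul_comm c x]
  linarith

lemma sq_div_three_le_one_add_mul_log_one_add_sub {e : ℝ} (h0 : 0 ≤ e) (h1 : e ≤ 1 / 2) :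
    e ^ 2 / 3 ≤ (1 + e) * log (1 + e) - e := by
  let f : ℝ → ℝ := fun x ↦ (1 + x) * log (1 + x) - x - x ^ 2 / 3
  have hf : ∀ x, 0 ≤ x → HasDerivAt f (log (1 + x) - 2 * x / 3) x := by
    intro x hx
    have hx' : 1 + x ≠ 0 := by linarith
    have h := (((hasDerivAt_id' x).const_add 1).mul
      (((hasDerivAt_id' x).const_add 1).log hx')).sub (hasDerivAt_id' x)
      |>.sub ((hasDerivAt_pow 2 x).div_const 3)
    refine h.congr_deriv ?_
    field_simp
    ring
  have hmono : MonotoneOn f (Set.Icc 0 e) := by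
    refine monotoneOn_of_hasDerivWithinAt_nonneg (convex_Icc 0 e)
      (fun x hx ↦ (hf x hx.1).continuousAt.continuousWithinAt)
      (fun x hx ↦ (hf x (interior_subset hx).1).hasDerivWithinAt) fun x hx ↦ ?_
    rw [interior_Icc] at hx
    have hlog := one_sub_inv_le_log_of_pos (by linarith [hx.1] : 0 < 1 + x)
    have hinv : (1 + x)⁻¹ ≤ 1 - 2 * x / 3 := by
      rw [inv_eq_one_div, div_le_iff₀ (by linarith [hx.1])]
      nlinarith [hx.1, hx.2]
    linarith
  have hf0 : f 0 = 0 := by simp [f]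
  have key : f 0 ≤ f e := hmono ⟨le_rfl, h0⟩ ⟨h0, le_rfl⟩ h0
  rw [hf0] at key
  change 0 ≤ (1 + e) * log (1 + e) - e - e ^ 2 / 3 at key
  linarith

lemma sq_div_three_le_add_one_sub_mul_log_one_sub {e : ℝ} (h0 : 0 ≤ e) (h1 : e < 1) :
    e ^ 2 / 3 ≤ e + (1 - e) * log (1 - e) := by
  let f : ℝ → ℝ := fun x ↦ x + (1 - x) * log (1 - x) - x ^ 2 / 3
  have hf : ∀ x, x < 1 → HasDerivAt f (-log (1 - x) - 2 * x / 3) x := by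
    intro x hx
    have hx' : 1 - x ≠ 0 := by linarith
    have h := ((hasDerivAt_id' x).add (((hasDerivAt_id' x).const_sub 1).mul
      (((hasDerivAt_id' x).const_sub 1).log hx'))).sub ((hasDerivAt_pow 2 x).div_const 3)
    refine h.congr_deriv ?_
    field_simp
    ring
  have hmono : MonotoneOn f (Set.Icc 0 e) := by
    refine monotoneOn_of_hasDerivWithinAt_nonneg (convex_Icc 0 e)
      (fun x hx ↦ (hf x (by linarith [hx.2])).continuousAt.continuousWithinAt)
      (fun x hx ↦ (hf x (by linarith [(interior_subset hx).2])).hasDerivWithinAt) fun x hx ↦ ?_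
    rw [interior_Icc] at hx
    have hlog := log_le_sub_one_of_pos (by linarith [hx.2] : 0 < 1 - x)
    linarith [hx.1]
  have hf0 : f 0 = 0 := by simp [f]
  have key : f 0 ≤ f e := hmono ⟨le_rfl, h0⟩ ⟨h0, le_rfl⟩ h0
  rw [hf0] at key
  change 0 ≤ e + (1 - e) * log (1 - e) - e ^ 2 / 3 at key
  linarith

lemma two_mul_exp_neg_log_two_mul {x : ℝ} (hx : 0 < x) : 2 * exp (-log (2 * x)) = 1 / x := by
  rw [exp_neg, exp_log (by positivity)]
  field_simp

lemma half_le_of_abs_sub_le {N M e : ℝ} (he : e ≤ 1 / 2) (hM : 0 ≤ M) (hN : |N - M| ≤ e * M) :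
    M / 2 ≤ N := by
  nlinarith [(abs_le.1 hN).1]

lemma abs_div_sub_div_le_of_abs_sub_le {N T n p V e d : ℝ} (hn : 0 < n) (hp : 0 < p)
    (hV0 : 0 ≤ V) (hVp : V ≤ p) (he : e ≤ 1 / 2)
    (hN : |N - n * p| ≤ e * (n * p)) (hT : |T - n * V| ≤ d * n) :
    |T / N - V / p| ≤ 2 * e + 2 / p * d := by
  have hN2 := half_le_of_abs_sub_le he (mul_pos hn hp).le hN
  have hNpos : 0 < N := by linarith [mul_pos hn hp]
  have hsplit : T / N - V / p = (p * (T - n * V) + V * (n * p - N)) / (N * p) := by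
    field_simp
    ring
  rw [hsplit, abs_div, abs_of_pos (mul_pos hNpos hp), div_le_iff₀ (mul_pos hNpos hp)]
  calc |p * (T - n * V) + V * (n * p - N)|
      ≤ p * |T - n * V| + V * |N - n * p| := by
        refine (abs_add_le _ _).trans_eq ?_
        rw [abs_mul, abs_mul, abs_of_pos hp, abs_of_nonneg hV0, abs_sub_comm (n * p)]
    _ ≤ p * (d * n) + p * (e * (n * p)) := by gcongr
    _ = (2 * e + 2 / p * d) * (n * p / 2 * p) := by field_simp; ring
    _ ≤ (2 * e + 2 / p * d) * (N * p) := by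
        have hd : 0 ≤ d := by nlinarith [abs_nonneg (T - n * V)]
        have he0 : 0 ≤ e := by nlinarith [abs_nonneg (N - n * p), mul_pos hn hp]
        gcongr

end ScalarInequalities

section ZeroOneValued

open Real

variable {Θ ι : Type*} [MeasurableSpace Θ] {P : Measure Θ} [IsProbabilityMeasure P]

lemma mgf_le_exp_mul_integral_of_mem_Icc_zero_one {Y : Θ → ℝ} (hm : AEMeasurable Y P)
    (hb : ∀ᵐ θ ∂P, Y θ ∈ Set.Icc 0 1) (c : ℝ) :
    mgf Y P c ≤ exp ((exp c - 1) * P[Y]) := by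
  have hY : Integrable Y P := Integrable.of_mem_Icc 0 1 hm hb
  calc mgf Y P c ≤ ∫ θ, (1 + (exp c - 1) * Y θ) ∂P := by
        refine integral_mono_ae (integrable_exp_mul_of_mem_Icc hm hb)
          ((integrable_const 1).add (hY.const_mul _)) ?_
        filter_upwards [hb] with θ hθ
        exact exp_mul_le_one_add_exp_sub_one_mul c hθ.1 hθ.2
    _ = (exp c - 1) * P[Y] + 1 := by
        rw [integral_add (integrable_const 1) (hY.const_mul _), integral_const_mul,
          integral_const, probReal_univ, one_smul, add_comm]
    _ ≤ exp ((exp c - 1) * P[Y]) := add_one_le_exp _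

variable [Fintype ι] {Y : ι → Θ → ℝ}

lemma mgf_sum_le_exp_mul_sum_integral_of_mem_Icc_zero_one (hind : iIndepFun Y P)
    (hm : ∀ i, AEMeasurable (Y i) P) (hb : ∀ i, ∀ᵐ θ ∂P, Y i θ ∈ Set.Icc 0 1) (c : ℝ) :
    mgf (∑ i, Y i) P c ≤ exp ((exp c - 1) * ∑ i, P[Y i]) := by
  rw [hind.mgf_sum₀ hm, Finset.mul_sum, exp_sum]
  exact Finset.prod_le_prod (fun i _ ↦ mgf_nonneg)
    fun i _ ↦ mgf_le_exp_mul_integral_of_mem_Icc_zero_one (hm i) (hb i) c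

lemma integrable_exp_mul_sum_of_mem_Icc_zero_one (hm : ∀ i, AEMeasurable (Y i) P)
    (hb : ∀ i, ∀ᵐ θ ∂P, Y i θ ∈ Set.Icc 0 1) (c : ℝ) :
    Integrable (fun θ ↦ exp (c * (∑ i, Y i) θ)) P := by
  refine integrable_exp_mul_of_mem_Icc (a := 0) (b := Fintype.card ι)
    (Finset.aemeasurable_sum _ fun i _ ↦ hm i) ?_
  filter_upwards [ae_all_iff.2 hb] with θ hθ
  simp only [Finset.sum_apply]
  refine ⟨Finset.sum_nonneg fun i _ ↦ (hθ i).1, ?_⟩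
  simpa using Finset.sum_le_sum fun i (_ : i ∈ Finset.univ) ↦ (hθ i).2

lemma measureReal_one_add_mul_le_sum_le (hind : iIndepFun Y P)
    (hm : ∀ i, AEMeasurable (Y i) P) (hb : ∀ i, ∀ᵐ θ ∂P, Y i θ ∈ Set.Icc 0 1)
    {e : ℝ} (he0 : 0 ≤ e) (he1 : e ≤ 1 / 2) :
    P.real {θ | (1 + e) * ∑ i, P[Y i] ≤ ∑ i, Y i θ} ≤ exp (-((∑ i, P[Y i]) * e ^ 2 / 3)) := by
  set M := ∑ i, P[Y i]
  have hM : 0 ≤ M := Finset.sum_nonneg fun i _ ↦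
    integral_nonneg_of_ae <| (hb i).mono fun θ hθ ↦ hθ.1
  have hc : 0 ≤ log (1 + e) := log_nonneg (by linarith)
  have h := measure_ge_le_exp_mul_mgf ((1 + e) * M) hc
    (integrable_exp_mul_sum_of_mem_Icc_zero_one hm hb _)
  simp only [Finset.sum_apply] at h
  refine h.trans ?_
  calc exp (-log (1 + e) * ((1 + e) * M)) * mgf (∑ i, Y i) P (log (1 + e))
      ≤ exp (-log (1 + e) * ((1 + e) * M)) * exp ((exp (log (1 + e)) - 1) * M) :=
        mul_le_mul_of_nonneg_left
          (mgf_sum_le_exp_mul_sum_integral_of_mem_Icc_zero_one hind hm hb _) (exp_pos _).le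
    _ = exp (-(M * ((1 + e) * log (1 + e) - e))) := by
        rw [← exp_add, exp_log (by linarith)]
        ring_nf
    _ ≤ exp (-(M * e ^ 2 / 3)) := by
        have := sq_div_three_le_one_add_mul_log_one_add_sub he0 he1
        gcongr
        rw [mul_div_assoc]
        exact mul_le_mul_of_nonneg_left this hM

lemma measureReal_sum_le_one_sub_mul_le (hind : iIndepFun Y P)
    (hm : ∀ i, AEMeasurable (Y i) P) (hb : ∀ i, ∀ᵐ θ ∂P, Y i θ ∈ Set.Icc 0 1)
    {e : ℝ} (he0 : 0 ≤ e) (he1 : e < 1) :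
    P.real {θ | ∑ i, Y i θ ≤ (1 - e) * ∑ i, P[Y i]} ≤ exp (-((∑ i, P[Y i]) * e ^ 2 / 3)) := by
  set M := ∑ i, P[Y i]
  have hM : 0 ≤ M := Finset.sum_nonneg fun i _ ↦
    integral_nonneg_of_ae <| (hb i).mono fun θ hθ ↦ hθ.1
  have hc : log (1 - e) ≤ 0 := log_nonpos (by linarith) (by linarith)
  have h := measure_le_le_exp_mul_mgf ((1 - e) * M) hc
    (integrable_exp_mul_sum_of_mem_Icc_zero_one hm hb _)
  simp only [Finset.sum_apply] at h
  refine h.trans ?_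
  calc exp (-log (1 - e) * ((1 - e) * M)) * mgf (∑ i, Y i) P (log (1 - e))
      ≤ exp (-log (1 - e) * ((1 - e) * M)) * exp ((exp (log (1 - e)) - 1) * M) :=
        mul_le_mul_of_nonneg_left
          (mgf_sum_le_exp_mul_sum_integral_of_mem_Icc_zero_one hind hm hb _) (exp_pos _).le
    _ = exp (-(M * (e + (1 - e) * log (1 - e)))) := by
        rw [← exp_add, exp_log (by linarith)]
        ring_nf
    _ ≤ exp (-(M * e ^ 2 / 3)) := by
        have := sq_div_three_le_add_one_sub_mul_log_one_sub he0 he1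
        gcongr
        rw [mul_div_assoc]
        exact mul_le_mul_of_nonneg_left this hM

/-- The multiplicative Chernoff bound. -/
lemma measureReal_mul_le_abs_sum_sub_le (hind : iIndepFun Y P)
    (hm : ∀ i, AEMeasurable (Y i) P) (hb : ∀ i, ∀ᵐ θ ∂P, Y i θ ∈ Set.Icc 0 1)
    {e : ℝ} (he0 : 0 ≤ e) (he1 : e ≤ 1 / 2) :
    P.real {θ | e * ∑ i, P[Y i] ≤ |∑ i, Y i θ - ∑ i, P[Y i]|} ≤
      2 * exp (-((∑ i, P[Y i]) * e ^ 2 / 3)) := by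
  calc _ ≤ P.real ({θ | (1 + e) * ∑ i, P[Y i] ≤ ∑ i, Y i θ} ∪
        {θ | ∑ i, Y i θ ≤ (1 - e) * ∑ i, P[Y i]}) := by
        refine measureReal_mono fun θ hθ ↦ ?_
        simp only [Set.mem_union, Set.mem_ofPred_eq] at hθ ⊢
        rcases le_abs'.1 hθ with h | h
        · right; linarith
        · left; linarith
    _ ≤ _ := (measureReal_union_le _ _).trans <| by
        linarith [measureReal_one_add_mul_le_sum_le hind hm hb he0 he1,
          measureReal_sum_le_one_sub_mul_le hind hm hb he0 (by linarith)]

/-- Hoeffding's inequality. -/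
lemma measureReal_le_abs_sum_sub_le (hind : iIndepFun Y P)
    (hm : ∀ i, AEMeasurable (Y i) P) (hb : ∀ i, ∀ᵐ θ ∂P, Y i θ ∈ Set.Icc 0 1)
    {ε : ℝ} (hε : 0 ≤ ε) :
    P.real {θ | ε ≤ |∑ i, Y i θ - ∑ i, P[Y i]|} ≤ 2 * exp (-2 * ε ^ 2 / Fintype.card ι) := by
  have hsub : ∀ i, HasSubgaussianMGF (fun θ ↦ Y i θ - P[Y i]) ((‖(1 : ℝ) - 0‖₊ / 2) ^ 2) P :=
    fun i ↦ hasSubgaussianMGF_of_mem_Icc (hm i) (hb i)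
  have hind' : iIndepFun (fun i θ ↦ Y i θ - P[Y i]) P :=
    hind.comp (fun i (x : ℝ) ↦ x - ∫ θ, Y i θ ∂P) fun i ↦ measurable_id.sub_const _
  have hup := HasSubgaussianMGF.measure_sum_ge_le_of_iIndepFun hind' (s := Finset.univ)
    (fun i _ ↦ hsub i) hε
  have hlo := HasSubgaussianMGF.measure_sum_ge_le_of_iIndepFun
    (hind'.comp (fun _ x ↦ -x) fun _ ↦ measurable_neg) (s := Finset.univ)
    (fun i _ ↦ (hsub i).neg) hε
  have hexp : exp (-ε ^ 2 / (2 * ((∑ _i : ι, (‖(1 : ℝ) - 0‖₊ / 2) ^ 2 : NNReal) : ℝ)))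
      = exp (-2 * ε ^ 2 / Fintype.card ι) := by
    congr 1
    push_cast [sub_zero, nnnorm_one, Finset.sum_const, Finset.card_univ, nsmul_eq_mul]
    ring
  calc _ ≤ P.real ({θ | ε ≤ ∑ i, (Y i θ - P[Y i])} ∪ {θ | ε ≤ ∑ i, -(Y i θ - P[Y i])}) := by
        refine measureReal_mono fun θ hθ ↦ ?_
        simp only [Set.mem_union, Set.mem_ofPred_eq, Finset.sum_sub_distrib,
          Finset.sum_neg_distrib] at hθ ⊢
        exact le_abs.1 hθ
    _ ≤ _ := (measureReal_union_le _ _).trans <| by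
        simp only [Function.comp_apply] at hlo
        rw [hexp] at hup hlo
        linarith

end ZeroOneValued

lemma ofReal_one_sub_le_of_measureReal_compl_le {Θ : Type*} [MeasurableSpace Θ] {P : Measure Θ}
    [IsProbabilityMeasure P] {G : Set Θ} {δ : ℝ} (h : P.real Gᶜ ≤ δ) :
    ENNReal.ofReal (1 - δ) ≤ P G := by
  rw [← ofReal_measureReal]
  refine ENNReal.ofReal_le_ofReal ?_
  have := measureReal_union_le (μ := P) G Gᶜ
  rw [Set.union_compl_self, probReal_univ] at this
  linarith

section FiniteSample

open Real

variable {Θ ι Q : Type*} [MeasurableSpace Θ] {P : Measure Θ} [IsProbabilityMeasure P]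
  [Fintype Q] [MeasurableSpace Q] [DiscreteMeasurableSpace Q] {w : Q → ℝ}

lemma integral_comp_eq_sum_mul {Z : Θ → Q} (hZ : Measurable Z) (hw : ∀ q, 0 ≤ w q)
    (hlaw : ∀ q, P {θ | Z θ = q} = ENNReal.ofReal (w q)) (g : Q → ℝ) :
    ∫ θ, g (Z θ) ∂P = ∑ q, w q * g q := by
  rw [← integral_map hZ.aemeasurable (Measurable.of_discrete.aestronglyMeasurable),
    integral_fintype .of_finite]
  refine Finset.sum_congr rfl fun q _ ↦ ?_
  rw [map_measureReal_apply hZ (measurableSet_singleton q), measureReal_def, Set.preimage]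
  simp_rw [Set.mem_singleton_iff]
  rw [hlaw, ENNReal.toReal_ofReal (hw q), smul_eq_mul]

variable [Fintype ι] {X : ι → Θ → Q}

lemma measureReal_mul_le_abs_sum_comp_sub_le (hX : ∀ i, Measurable (X i)) (hind : iIndepFun X P)
    (hw : ∀ q, 0 ≤ w q) (hlaw : ∀ i q, P {θ | X i θ = q} = ENNReal.ofReal (w q))
    {g : Q → ℝ} (hg : ∀ q, g q ∈ Set.Icc 0 1) {e : ℝ} (he0 : 0 ≤ e) (he1 : e ≤ 1 / 2) :
    P.real {θ | e * (Fintype.card ι * ∑ q, w q * g q) ≤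
        |∑ i, g (X i θ) - Fintype.card ι * ∑ q, w q * g q|} ≤
      2 * exp (-(Fintype.card ι * (∑ q, w q * g q) * e ^ 2 / 3)) := by
  have h := measureReal_mul_le_abs_sum_sub_le (hind.comp (fun _ ↦ g) fun _ ↦ .of_discrete)
    (fun i ↦ (Measurable.of_discrete.comp (hX i)).aemeasurable) (fun i ↦ ae_of_all _ fun θ ↦ hg _)
    he0 he1
  simpa only [Function.comp_apply, integral_comp_eq_sum_mul (hX _) hw (hlaw _),
    Finset.sum_const, Finset.card_univ, nsmul_eq_mul] using h

lemma measureReal_le_abs_sum_comp_sub_le (hX : ∀ i, Measurable (X i)) (hind : iIndepFun X P)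
    (hw : ∀ q, 0 ≤ w q) (hlaw : ∀ i q, P {θ | X i θ = q} = ENNReal.ofReal (w q))
    {g : Q → ℝ} (hg : ∀ q, g q ∈ Set.Icc 0 1) {ε : ℝ} (hε : 0 ≤ ε) :
    P.real {θ | ε ≤ |∑ i, g (X i θ) - Fintype.card ι * ∑ q, w q * g q|} ≤
      2 * exp (-2 * ε ^ 2 / Fintype.card ι) := by
  have h := measureReal_le_abs_sum_sub_le (hind.comp (fun _ ↦ g) fun _ ↦ .of_discrete)
    (fun i ↦ (Measurable.of_discrete.comp (hX i)).aemeasurable) (fun i ↦ ae_of_all _ fun θ ↦ hg _)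
    hε
  simpa only [Function.comp_apply, integral_comp_eq_sum_mul (hX _) hw (hlaw _),
    Finset.sum_const, Finset.card_univ, nsmul_eq_mul] using h

end FiniteSample

section Signaling

variable {Ω S A Θ : Type*} {μ : Ω → ℝ} {π : Ω → S → ℝ} {v : A → Ω → ℝ} {t : ℕ}

def signalCount (X : Fin t → Θ → Ω × S) (s : S) (θ : Θ) : ℕ :=
  #(Finset.univ.filter fun τ ↦ (X τ θ).2 = s)

def signalUtilitySum (X : Fin t → Θ → Ω × S) (v : A → Ω → ℝ) (a : A) (s : S) (θ : Θ) : ℝ :=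
  ∑ τ ∈ Finset.univ.filter (fun τ ↦ (X τ θ).2 = s), v a (X τ θ).1

lemma signalCount_eq_sum (X : Fin t → Θ → Ω × S) (s : S) (θ : Θ) :
    (signalCount X s θ : ℝ) = ∑ τ, if (X τ θ).2 = s then 1 else 0 :=
  Finset.natCast_card_filter _ _

lemma signalUtilitySum_eq_sum (X : Fin t → Θ → Ω × S) (a : A) (s : S) (θ : Θ) :
    signalUtilitySum X v a s θ = ∑ τ, if (X τ θ).2 = s then v a (X τ θ).1 else 0 :=
  Finset.sum_filter _ _

variable [Fintype Ω]

lemma sum_joint_mul_ite_snd_eq [Fintype S] (s : S) (f : Ω → ℝ) :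
    ∑ q : Ω × S, μ q.1 * π q.1 q.2 * (if q.2 = s then f q.1 else 0) =
      ∑ ω, μ ω * π ω s * f ω := by
  simp [Fintype.sum_prod_type, mul_ite]

lemma marg_mul_vPost {s : S} (hs : marg μ π s ≠ 0) (a : A) :
    marg μ π s * vPost μ π v a s = ∑ ω, μ ω * π ω s * v a ω := by
  simp only [vPost, post, Finset.mul_sum]
  refine Finset.sum_congr rfl fun ω _ ↦ ?_
  field_simp

lemma sum_joint_mul_mem_Icc_zero_marg [Fintype S] (hμ : IsProb μ) (hπ : IsDist π)
    (hv : ∀ a ω, 0 ≤ v a ω ∧ v a ω ≤ 1) (a : A) (s : S) :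
    ∑ ω, μ ω * π ω s * v a ω ∈ Set.Icc 0 (marg μ π s) := by
  have hμπ : ∀ ω, 0 ≤ μ ω * π ω s := fun ω ↦ mul_nonneg (hμ.1 ω) (hπ.1 ω s)
  refine ⟨Finset.sum_nonneg fun ω _ ↦ mul_nonneg (hμπ ω) (hv a ω).1,
    Finset.sum_le_sum fun ω _ ↦ ?_⟩
  simpa using mul_le_mul_of_nonneg_left (hv a ω).2 (hμπ ω)

variable [Fintype S] [Fintype A]

def signalRadius (μ : Ω → ℝ) (π : Ω → S → ℝ) (t : ℕ) (s : S) : ℝ :=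
  √(3 * Real.log (2 * Fintype.card S * t) / (marg μ π s * t))

variable (S A) in
def utilityRadius (t : ℕ) : ℝ :=
  √(Real.log (2 * Fintype.card S * Fintype.card A * t) / (2 * t))

def signalDeviationEvent (μ : Ω → ℝ) (π : Ω → S → ℝ) (v : A → Ω → ℝ)
    (X : Fin t → Θ → Ω × S) (s : S) : Set Θ :=
  {θ | signalRadius μ π t s * (t * marg μ π s) ≤ |signalCount X s θ - t * marg μ π s|} ∪
    ⋃ a, {θ | utilityRadius S A t * t ≤
      |signalUtilitySum X v a s θ - t * ∑ ω, μ ω * π ω s * v a ω|}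

lemma empirical_utility_le_of_notMem_signalDeviationEvent (hμ : IsProb μ) (hπ : IsDist π)
    (hv : ∀ a ω, 0 ≤ v a ω ∧ v a ω ≤ 1) (ht : 0 < t) {X : Fin t → Θ → Ω × S} {s : S}
    (hs : 0 < marg μ π s) (hsmall : signalRadius μ π t s < 1 / 2) {θ : Θ}
    (hθ : θ ∉ signalDeviationEvent μ π v X s) :
    0 < signalCount X s θ ∧ ∀ a, |1 / (signalCount X s θ : ℝ) * signalUtilitySum X v a s θ
      - vPost μ π v a s| ≤ 2 * signalRadius μ π t s + 2 / marg μ π s * utilityRadius S A t := by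
  simp only [signalDeviationEvent, Set.mem_union, Set.mem_iUnion, Set.mem_ofPred_eq, not_or,
    not_exists, not_le] at hθ
  obtain ⟨hN, hU⟩ := hθ
  have htR : (0 : ℝ) < t := by exact_mod_cast ht
  have htp : 0 < (t : ℝ) * marg μ π s := mul_pos htR hs
  refine ⟨?_, fun a ↦ ?_⟩
  · have := half_le_of_abs_sub_le hsmall.le htp.le hN.le
    exact_mod_cast (half_pos htp).trans_le this
  have hV := sum_joint_mul_mem_Icc_zero_marg hμ hπ hv a s
  have hvPost : vPost μ π v a s = (∑ ω, μ ω * π ω s * v a ω) / marg μ π s := by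
    rw [← marg_mul_vPost hs.ne' a, mul_div_cancel_left₀ _ hs.ne']
  rw [one_div_mul_eq_div, hvPost]
  exact abs_div_sub_div_le_of_abs_sub_le htR hs hV.1 hV.2 hsmall.le hN.le (hU a).le

end Signaling

section SignalSample

variable {Ω S A Θ : Type*} [Fintype Ω] [Fintype S] [Fintype A]
  [MeasurableSpace Ω] [DiscreteMeasurableSpace Ω] [MeasurableSpace S] [DiscreteMeasurableSpace S]
  [MeasurableSpace Θ] {P : Measure Θ} [IsProbabilityMeasure P]
  {μ : Ω → ℝ} {π : Ω → S → ℝ} {v : A → Ω → ℝ} {t : ℕ} {X : Fin t → Θ → Ω × S}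

lemma measureReal_signalCount_deviation_le (hμ : IsProb μ) (hπ : IsDist π) (ht : 0 < t)
    (hmeas : ∀ τ, Measurable (X τ)) (hiid : iIndepFun X P)
    (hlaw : ∀ τ ω s, P {θ | X τ θ = (ω, s)} = ENNReal.ofReal (μ ω * π ω s))
    {s : S} (hs : 0 < marg μ π s) (hsmall : signalRadius μ π t s ≤ 1 / 2) :
    P.real {θ | signalRadius μ π t s * (t * marg μ π s) ≤ |signalCount X s θ - t * marg μ π s|} ≤
      1 / (Fintype.card S * t) := by
  have ht1 : (1 : ℝ) ≤ t := by exact_mod_cast ht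
  have hS : (1 : ℝ) ≤ Fintype.card S := by exact_mod_cast Fintype.card_pos_iff.2 ⟨s⟩
  have hL : 0 ≤ Real.log (2 * Fintype.card S * t) := Real.log_nonneg (by nlinarith)
  have hmarg : ∑ q : Ω × S, μ q.1 * π q.1 q.2 * (if q.2 = s then 1 else 0) = marg μ π s := by
    simpa [marg] using sum_joint_mul_ite_snd_eq (μ := μ) (π := π) s fun _ ↦ 1
  have h := measureReal_mul_le_abs_sum_comp_sub_le hmeas hiid
    (fun q ↦ mul_nonneg (hμ.1 _) (hπ.1 _ _)) (fun τ q ↦ hlaw τ q.1 q.2)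
    (g := fun q ↦ if q.2 = s then 1 else 0) (fun q ↦ by split_ifs <;> simp)
    (Real.sqrt_nonneg _) hsmall
  simp only [hmarg, Fintype.card_fin] at h
  simp only [signalCount_eq_sum]
  refine h.trans_eq ?_
  rw [Real.sq_sqrt (div_nonneg (by linarith) (by positivity)),
    ← two_mul_exp_neg_log_two_mul (by positivity : (0 : ℝ) < Fintype.card S * t)]
  congr 3
  field_simp

lemma measureReal_signalUtilitySum_deviation_le (hμ : IsProb μ) (hπ : IsDist π)
    (hv : ∀ a ω, 0 ≤ v a ω ∧ v a ω ≤ 1) (ht : 0 < t) (hmeas : ∀ τ, Measurable (X τ))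
    (hiid : iIndepFun X P)
    (hlaw : ∀ τ ω s, P {θ | X τ θ = (ω, s)} = ENNReal.ofReal (μ ω * π ω s)) (a : A) (s : S) :
    P.real {θ | utilityRadius S A t * t ≤
        |signalUtilitySum X v a s θ - t * ∑ ω, μ ω * π ω s * v a ω|} ≤
      1 / (Fintype.card S * Fintype.card A * t) := by
  have ht1 : (1 : ℝ) ≤ t := by exact_mod_cast ht
  have hS : (1 : ℝ) ≤ Fintype.card S := by exact_mod_cast Fintype.card_pos_iff.2 ⟨s⟩
  have hA : (1 : ℝ) ≤ Fintype.card A := by exact_mod_cast Fintype.card_pos_iff.2 ⟨a⟩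
  have hL : 0 ≤ Real.log (2 * Fintype.card S * Fintype.card A * t) :=
    Real.log_nonneg (by nlinarith [one_le_mul_of_one_le_of_one_le hS hA])
  have h := measureReal_le_abs_sum_comp_sub_le hmeas hiid
    (fun q ↦ mul_nonneg (hμ.1 _) (hπ.1 _ _)) (fun τ q ↦ hlaw τ q.1 q.2)
    (g := fun q ↦ if q.2 = s then v a q.1 else 0)
    (fun q ↦ by split_ifs <;> simp [(hv a q.1).1, (hv a q.1).2])
    (ε := utilityRadius S A t * t) (mul_nonneg (Real.sqrt_nonneg _) (by positivity))
  simp only [sum_joint_mul_ite_snd_eq, Fintype.card_fin] at h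
  simp only [signalUtilitySum_eq_sum]
  refine h.trans_eq ?_
  rw [utilityRadius, mul_pow, Real.sq_sqrt (by positivity), ← two_mul_exp_neg_log_two_mul
    (by positivity : (0 : ℝ) < Fintype.card S * Fintype.card A * t)]
  congr 3
  field_simp

lemma measureReal_signalDeviationEvent_le (hμ : IsProb μ) (hπ : IsDist π)
    (hv : ∀ a ω, 0 ≤ v a ω ∧ v a ω ≤ 1) (ht : 0 < t) (hmeas : ∀ τ, Measurable (X τ))
    (hiid : iIndepFun X P)
    (hlaw : ∀ τ ω s, P {θ | X τ θ = (ω, s)} = ENNReal.ofReal (μ ω * π ω s))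
    {s : S} (hs : 0 < marg μ π s) (hsmall : signalRadius μ π t s ≤ 1 / 2) :
    P.real (signalDeviationEvent μ π v X s) ≤ 2 / (Fintype.card S * t) := by
  have hutility : ∑ a : A, (1 : ℝ) / (Fintype.card S * Fintype.card A * t) ≤
      1 / (Fintype.card S * t) := by
    rcases isEmpty_or_nonempty A with hA | hA
    · simp only [Finset.univ_eq_empty, Finset.sum_empty]
      positivity
    · have : (0 : ℝ) < Fintype.card A := by exact_mod_cast Fintype.card_pos
      rw [Finset.sum_const, Finset.card_univ, nsmul_eq_mul]
      refine le_of_eq ?_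
      field_simp
  calc P.real (signalDeviationEvent μ π v X s)
      ≤ 1 / (Fintype.card S * t) + ∑ a : A, (1 : ℝ) / (Fintype.card S * Fintype.card A * t) :=
        (measureReal_union_le _ _).trans <|
          add_le_add (measureReal_signalCount_deviation_le hμ hπ ht hmeas hiid hlaw hs hsmall) <|
          (measureReal_iUnion_fintype_le _).trans <| Finset.sum_le_sum fun a _ ↦
            measureReal_signalUtilitySum_deviation_le hμ hπ hv ht hmeas hiid hlaw a s
    _ ≤ 2 / (Fintype.card S * t) := by
        rw [div_eq_mul_one_div 2, two_mul]
        gcongr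

end SignalSample

theorem empirical_utility_concentration_general
    {Ω S A : Type*} [Fintype Ω] [Fintype S] [Fintype A]
    [MeasurableSpace Ω] [DiscreteMeasurableSpace Ω]
    [MeasurableSpace S] [DiscreteMeasurableSpace S]
    (μ : Ω → ℝ) (hμ : IsProb μ)
    (π : Ω → S → ℝ) (hπ : IsDist π)
    (v : A → Ω → ℝ) (hv : ∀ a ω, 0 ≤ v a ω ∧ v a ω ≤ 1)
    (t : ℕ) (ht : 1 ≤ t)
    {Θ : Type*} [MeasurableSpace Θ] (P : Measure Θ) [IsProbabilityMeasure P]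
    (X : Fin t → Θ → Ω × S)
    (hmeas : ∀ τ, Measurable (X τ))
    (hiid : iIndepFun X P)
    (hlaw : ∀ τ ω s, P {θ | X τ θ = (ω, s)} = ENNReal.ofReal (μ ω * π ω s))
    (hsmall : ∀ s : S, 0 < marg μ π s →
      Real.sqrt (3 * Real.log (2 * (Fintype.card S : ℝ) * t) / (marg μ π s * t)) < 1 / 2) :
    ENNReal.ofReal (1 - 2 / (t : ℝ)) ≤
      P {θ | ∀ s : S, 0 < marg μ π s →
        0 < (Finset.univ.filter (fun τ : Fin t => (X τ θ).2 = s)).card ∧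
        ∀ a : A,
          |(1 / ((Finset.univ.filter (fun τ : Fin t => (X τ θ).2 = s)).card : ℝ)) *
              (∑ τ ∈ Finset.univ.filter (fun τ : Fin t => (X τ θ).2 = s), v a (X τ θ).1)
            - vPost μ π v a s|
          ≤ 2 * Real.sqrt (3 * Real.log (2 * (Fintype.card S : ℝ) * t) / (marg μ π s * t))
            + (2 / marg μ π s) *
                Real.sqrt (Real.log (2 * (Fintype.card S : ℝ) * (Fintype.card A : ℝ) * t) /
                  (2 * t))} := by
  set S₀ := Finset.univ.filter fun s ↦ 0 < marg μ π s
  refine ofReal_one_sub_le_of_measureReal_compl_le ?_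
  calc _ ≤ P.real (⋃ s ∈ S₀, signalDeviationEvent μ π v X s) := by
        refine measureReal_mono (Set.compl_subset_comm.1 fun θ hθ s hs ↦ ?_) (measure_ne_top P _)
        simp only [Set.mem_compl_iff, Set.mem_iUnion, not_exists] at hθ
        exact empirical_utility_le_of_notMem_signalDeviationEvent hμ hπ hv ht hs (hsmall s hs)
          (hθ s (by simpa [S₀]))
    _ ≤ ∑ s ∈ S₀, P.real (signalDeviationEvent μ π v X s) := measureReal_biUnion_finset_le _ _
    _ ≤ ∑ _s ∈ S₀, 2 / (Fintype.card S * t : ℝ) := Finset.sum_le_sum fun s hs ↦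
        have hs := (Finset.mem_filter.1 hs).2
        measureReal_signalDeviationEvent_le hμ hπ hv ht hmeas hiid hlaw hs (hsmall s hs).le
    _ ≤ 2 / t := by
        rw [Finset.sum_const, nsmul_eq_mul]
        have hcard : (S₀.card : ℝ) ≤ Fintype.card S := by exact_mod_cast Finset.card_le_univ S₀
        rcases (Fintype.card S).eq_zero_or_pos with hS | hS
        · rw [hS, Nat.cast_zero, zero_mul, div_zero, mul_zero]
          positivity
        · calc (S₀.card : ℝ) * (2 / (Fintype.card S * t))
              ≤ Fintype.card S * (2 / (Fintype.card S * t)) := by gcongr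
            _ = 2 / t := by field_simp

/-- Lemma 3.2, concentration: let `(ω_τ, s_τ)`, `τ = 1, …, t`, be i.i.d. pairs
with joint law `P(ω, s) = μ(ω)·π(s|ω)`.  If `√(3·log(2|S|t)/(π(s)·t)) < 1/2` for every sent
signal `s`, then with probability at least `1 - 2/t`, every sent signal `s` is realized at least
once and the empirical utility `v̂(a, s)` of every action `a` satisfies
`|v̂(a,s) - v(a, μ_s)| ≤ 2·√(3·log(2|S|t)/(π(s)·t)) + (2/π(s))·√(log(2|S||A|t)/(2t))`. -/
theorem empirical_utility_concentration
    {Ω S A : Type*} [Fintype Ω] [Fintype S] [Fintype A]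
    [Nonempty Ω] [Nonempty S] [Nonempty A]
    [MeasurableSpace Ω] [DiscreteMeasurableSpace Ω]
    [MeasurableSpace S] [DiscreteMeasurableSpace S]
    (μ : Ω → ℝ) (hμ : IsProb μ)
    (π : Ω → S → ℝ) (hπ : IsDist π)
    (v : A → Ω → ℝ) (hv : ∀ a ω, 0 ≤ v a ω ∧ v a ω ≤ 1)
    (t : ℕ) (ht : 1 ≤ t)
    {Θ : Type*} [MeasurableSpace Θ] (P : Measure Θ) [IsProbabilityMeasure P]
    (X : Fin t → Θ → Ω × S)
    (hmeas : ∀ τ, Measurable (X τ))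
    (hiid : iIndepFun X P)
    (hlaw : ∀ τ ω s, P {θ | X τ θ = (ω, s)} = ENNReal.ofReal (μ ω * π ω s))
    (hsmall : ∀ s : S, 0 < marg μ π s →
      Real.sqrt (3 * Real.log (2 * (Fintype.card S : ℝ) * t) / (marg μ π s * t)) < 1 / 2) :
    ENNReal.ofReal (1 - 2 / (t : ℝ)) ≤
      P {θ | ∀ s : S, 0 < marg μ π s →
        0 < (Finset.univ.filter (fun τ : Fin t => (X τ θ).2 = s)).card ∧
        ∀ a : A,
          |(1 / ((Finset.univ.filter (fun τ : Fin t => (X τ θ).2 = s)).card : ℝ)) *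
              (∑ τ ∈ Finset.univ.filter (fun τ : Fin t => (X τ θ).2 = s), v a (X τ θ).1)
            - vPost μ π v a s|
          ≤ 2 * Real.sqrt (3 * Real.log (2 * (Fintype.card S : ℝ) * t) / (marg μ π s * t))
            + (2 / marg μ π s) *
                Real.sqrt (Real.log (2 * (Fintype.card S : ℝ) * (Fintype.card A : ℝ) * t) /
                  (2 * t))} :=
  empirical_utility_concentration_general μ hμ π hπ v hv t ht P X hmeas hiid hlaw hsmall
end
end
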